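/- arXiv:1709.05407 — 4 statements merged into one kernel-verified Lean document; each statement's English description precedes it below -/
import Mathlib

section
/- Let A be an order dense ideal of a Hausdorff locally solid vector lattice (X,τ). If u_Aτ is locally bounded, then A = X. -/
open Filter Set Topology

variable {X : Type*} [Lattice X] [AddCommGroup X] [Module ℝ X]
  [CovariantClass X X (· + ·) (· ≤ ·)] [PosSMulMono ℝ X]

/-- The Archimedean property for a lattice-ordered group. -/
def VLArchimedean (X : Type*) [Lattice X] [AddCommGroup X] : Prop :=
  ∀ x y : X, 0 ≤ x → (∀ n : ℕ, n • x ≤ y) → x = 0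

/-- A set is solid if `x ∈ S` and `|y| ≤ |x|` imply `y ∈ S`. -/
def IsSolid (S : Set X) : Prop := ∀ ⦃x y : X⦄, x ∈ S → |y| ≤ |x| → y ∈ S

/-- A locally solid (linear) topology on a vector lattice. -/
def IsLocallySolidTop (τ : TopologicalSpace X) : Prop :=
  @IsTopologicalAddGroup X τ _ ∧ @ContinuousSMul ℝ X _ _ τ ∧
    ∀ U ∈ @nhds X τ 0, ∃ V ∈ @nhds X τ 0, IsSolid V ∧ V ⊆ U

/-- An order ideal: a solid linear subspace. -/
def IsOrderIdeal (A : Set X) : Prop :=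
  0 ∈ A ∧ (∀ x ∈ A, ∀ y ∈ A, x + y ∈ A) ∧ (∀ (c : ℝ), ∀ x ∈ A, c • x ∈ A) ∧ IsSolid A

/-- The order ideal generated by a set. -/
def idealGenerated (A : Set X) : Set X := ⋂₀ {I | IsOrderIdeal I ∧ A ⊆ I}

/-- A band: an order ideal closed under existing suprema. -/
def IsBand (B : Set X) : Prop :=
  IsOrderIdeal B ∧ ∀ D ⊆ B, ∀ x : X, IsLUB D x → x ∈ B

/-- The band generated by a set. -/
def bandGenerated (A : Set X) : Set X := ⋂₀ {B | IsBand B ∧ A ⊆ B}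

/-- `A` is a countable order basis: `A` is at most countable and generates `X` as a band. -/
def CountableOrderBasis (A : Set X) : Prop := A.Countable ∧ bandGenerated A = Set.univ

/-- The neighbourhood filter of zero of the unbounded topology `u_A τ`:
generated by the sets `{x : |x| ⊓ a ∈ U}` for `U` a `τ`-neighbourhood of zero, `a ∈ A₊`. -/
def unbNhdsZero (τ : TopologicalSpace X) (A : Set X) : Filter X :=
  ⨅ a ∈ {a ∈ A | 0 ≤ a}, Filter.comap (fun x => |x| ⊓ a) (@nhds X τ 0)

/-- The unbounded topology `u_A τ` induced by the ideal `A`; `u τ = unbTopology τ Set.univ`. -/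
def unbTopology (τ : TopologicalSpace X) (A : Set X) : TopologicalSpace X :=
  TopologicalSpace.mkOfNhds fun x => Filter.map (x + ·) (unbNhdsZero τ A)

/-- A sublattice/ideal is order dense if every nonzero positive vector dominates a
nonzero positive vector of it. -/
def OrderDense (A : Set X) : Prop := ∀ x : X, 0 < x → ∃ y ∈ A, 0 < y ∧ y ≤ x

/-- A minimal topology: a Hausdorff locally solid topology with no strictly coarser
Hausdorff locally solid topology. (In Mathlib's order on `TopologicalSpace`,
`τ ≤ σ` means `τ` is finer than `σ`.) -/
def IsMinimalTop (τ : TopologicalSpace X) : Prop :=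
  IsLocallySolidTop τ ∧ @T2Space X τ ∧
    ∀ σ : TopologicalSpace X, IsLocallySolidTop σ → @T2Space X σ → τ ≤ σ → σ = τ

/-- The countable sup property. -/
def CountableSupProperty (Y : Type*) [Lattice Y] : Prop :=
  ∀ S : Set Y, ∀ x : Y, S.Nonempty → IsLUB S x → ∃ C ⊆ S, C.Countable ∧ IsLUB C x

/-- Order convergence to zero of a net: there is a downward directed set `D` with
infimum `0`, each member of which eventually dominates `|x α|`. -/
def OrderNull {ι : Type*} [Preorder ι] (x : ι → X) : Prop :=
  ∃ D : Set X, D.Nonempty ∧ (∀ a ∈ D, ∀ b ∈ D, ∃ c ∈ D, c ≤ a ∧ c ≤ b) ∧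
    IsGLB D 0 ∧ ∀ d ∈ D, ∃ α₀ : ι, ∀ α, α₀ ≤ α → |x α| ≤ d

/-- Unbounded order (uo-) convergence to zero of a net. -/
def UoNull {ι : Type*} [Preorder ι] (x : ι → X) : Prop :=
  ∀ u : X, 0 ≤ u → OrderNull (fun α => |x α| ⊓ u)

/-- A set is topologically bounded if it is absorbed by every neighbourhood of zero. -/
def TopBounded (τ : TopologicalSpace X) (S : Set X) : Prop :=
  ∀ U ∈ @nhds X τ 0, ∃ l : ℝ, 0 < l ∧ ∀ x ∈ S, l • x ∈ U

/-- A locally bounded topology: it has a topologically bounded neighbourhood of zero. -/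
def LocallyBoundedTop (τ : TopologicalSpace X) : Prop :=
  ∃ V ∈ @nhds X τ 0, TopBounded τ V

/-- A submetrizable topology: finer than some metrizable linear topology.
(In Mathlib's order on `TopologicalSpace`, `τ ≤ σ` means `τ` is finer than `σ`.) -/
def Submetrizable (τ : TopologicalSpace X) : Prop :=
  ∃ σ : TopologicalSpace X, @IsTopologicalAddGroup X σ _ ∧ @ContinuousSMul ℝ X _ _ σ ∧
    @TopologicalSpace.MetrizableSpace X σ ∧ τ ≤ σ

/-- A Riesz submetrizable topology: finer than some metrizable locally solid topology. -/
def RieszSubmetrizable (τ : TopologicalSpace X) : Prop :=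
  ∃ σ : TopologicalSpace X, IsLocallySolidTop σ ∧ @TopologicalSpace.MetrizableSpace X σ ∧ τ ≤ σ

/-- Dedekind (order) completeness. -/
def DedekindComplete (Y : Type*) [Lattice Y] : Prop :=
  ∀ S : Set Y, S.Nonempty → BddAbove S → ∃ x, IsLUB S x

/-- Lateral completeness: every nonempty set of pairwise disjoint positive vectors
has a supremum. -/
def LaterallyComplete (Y : Type*) [Lattice Y] [AddCommGroup Y] : Prop :=
  ∀ S : Set Y, S.Nonempty → (∀ x ∈ S, 0 ≤ x) → (S.Pairwise fun a b => a ⊓ b = 0) →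
    ∃ x, IsLUB S x

/-!
Take a `u_A τ`-bounded neighbourhood `V ⊇ {x : |x| ⊓ a ∈ W}` with `a ∈ A₊` and `W` a solid
`τ`-neighbourhood of zero. For `x ≥ 0` pick `t > 0` with `t • x ∈ W`; since
`(c • (t • x - a)⁺) ⊓ a ≤ t • x` for every `c ≥ 0`, `V` contains the whole ray through
`(t • x - a)⁺`. But a `u_A τ`-bounded set contains no ray through a vector `z > 0`: by order
density some `0 < y ≤ z` lies in `A`, and `{v : |v| ⊓ y ≠ y}` is a `u_A τ`-neighbourhood of zero
missing `z`. Hence `t • x ≤ a`, so every vector lies in the ideal generated by `a ∈ A`.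
-/

section VectorLattice

variable {E : Type*} [Lattice E] [AddCommGroup E] [AddLeftMono E]

lemma add_inf_le_inf_add_inf {u v b : E} (hu : 0 ≤ u) (hv : 0 ≤ v) (hb : 0 ≤ b) :
    (u + v) ⊓ b ≤ u ⊓ b + v ⊓ b := by
  rw [inf_add]
  refine le_inf ?_ (inf_le_right.trans (le_add_of_nonneg_right (le_inf hv hb)))
  rw [add_inf]
  exact le_inf inf_le_left (inf_le_right.trans (le_add_of_nonneg_left hu))

lemma abs_add_inf_le (x y : E) {b : E} (hb : 0 ≤ b) :
    |x + y| ⊓ b ≤ |x| ⊓ b + |y| ⊓ b :=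
  (inf_le_inf_right b (abs_add_le x y)).trans
    (add_inf_le_inf_add_inf (abs_nonneg x) (abs_nonneg y) hb)

lemma inf_add_posPart_sub (z u : E) : z ⊓ u + (z - u)⁺ = z := by
  rw [inf_eq_sub_posPart_sub, sub_add_cancel]

variable [Module ℝ E] [PosSMulMono ℝ E]

lemma smul_le_smul_of_nonneg_right' {c d : ℝ} (hcd : c ≤ d) {p : E} (hp : 0 ≤ p) :
    c • p ≤ d • p :=
  sub_nonneg.1 (by rw [← sub_smul]; exact smul_nonneg (sub_nonneg.2 hcd) hp)

lemma smul_inf_eq_zero {p q : E} (hp : 0 ≤ p) (hq : 0 ≤ q) (hpq : p ⊓ q = 0)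
    {c : ℝ} (hc : 0 ≤ c) : (c • p) ⊓ q = 0 := by
  have hm : (0 : ℝ) < max c 1 := lt_max_of_lt_right one_pos
  refine le_antisymm ?_ (le_inf (smul_nonneg hc hp) hq)
  calc (c • p) ⊓ q ≤ (max c 1 • p) ⊓ (max c 1 • q) :=
        inf_le_inf (smul_le_smul_of_nonneg_right' (le_max_left c 1) hp)
          (by simpa using smul_le_smul_of_nonneg_right' (le_max_right c 1) hq)
    _ = max c 1 • (p ⊓ q) := ((OrderIso.smulRight hm).map_inf p q).symm
    _ = 0 := by rw [hpq, smul_zero]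

lemma smul_posPart_sub_inf_le {x : E} (hx : 0 ≤ x) (b : E) {c : ℝ} (hc : 0 ≤ c) :
    (c • (x - b)⁺) ⊓ b ≤ x := by
  have hdisj : (c • (x - b)⁺) ⊓ (x - b)⁻ = 0 :=
    smul_inf_eq_zero (posPart_nonneg _) (negPart_nonneg _) (posPart_inf_negPart_eq_zero _) hc
  rw [← sub_nonpos, inf_sub, ← hdisj]
  refine inf_le_inf (sub_le_self _ hx) ?_
  simpa using neg_le_negPart (x - b)

lemma IsSolid.abs_smul_posPart_sub_inf_mem {W : Set E} (hW : IsSolid W) {x : E} (hxW : x ∈ W)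
    (hx : 0 ≤ x) {a : E} (ha : 0 ≤ a) {c : ℝ} (hc : 0 ≤ c) : |c • (x - a)⁺| ⊓ a ∈ W := by
  refine hW hxW ?_
  have hcp : 0 ≤ c • (x - a)⁺ := smul_nonneg hc (posPart_nonneg _)
  rw [abs_of_nonneg hcp, abs_of_nonneg (le_inf hcp ha), abs_of_nonneg hx]
  exact smul_posPart_sub_inf_le hx a hc

end VectorLattice

lemma exists_pos_smul_mem {E : Type*} [AddCommMonoid E] [Module ℝ E] [TopologicalSpace E]
    [ContinuousSMul ℝ E] (x : E) {U : Set E} (hU : U ∈ 𝓝 0) : ∃ t : ℝ, 0 < t ∧ t • x ∈ U := by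
  have hcont : Continuous fun t : ℝ => t • x := by fun_prop
  replace hcont := (hcont.tendsto' 0 0 (zero_smul ℝ x)).mono_left (nhdsWithin_le_nhds (s := Ioi 0))
  exact ((hcont.eventually_mem hU).and self_mem_nhdsWithin).exists.imp fun t ht => ⟨ht.2, ht.1⟩

section UnboundedTopology

variable {E : Type*} [Lattice E] [AddCommGroup E] {τ : TopologicalSpace E} {A : Set E}

lemma pure_zero_le_unbNhdsZero : pure 0 ≤ unbNhdsZero τ A :=
  le_iInf₂ fun a ha => by
    rw [← map_le_iff_le_comap, map_pure, abs, neg_zero, sup_idem, inf_eq_left.2 ha.2]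
    exact pure_le_nhds 0

variable [Module ℝ E]

lemma IsLocallySolidTop.hasBasis_nhds_zero (hτ : IsLocallySolidTop τ) :
    (@nhds E τ 0).HasBasis (fun W => W ∈ @nhds E τ 0 ∧ IsSolid W) id :=
  (@nhds E τ 0).basis_sets.restrict fun U hU => hτ.2.2 U hU

variable [AddLeftMono E]

lemma comap_abs_inf_le_comap_abs_inf (hτ : IsLocallySolidTop τ) {a b : E} (ha : 0 ≤ a)
    (hab : a ≤ b) :
    comap (fun x => |x| ⊓ b) (@nhds E τ 0) ≤ comap (fun x => |x| ⊓ a) (@nhds E τ 0) := by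
  refine ((hτ.hasBasis_nhds_zero.comap _).le_basis_iff (hτ.hasBasis_nhds_zero.comap _)).2
    fun W hW => ⟨W, hW, fun x hx => hW.2 hx ?_⟩
  rw [abs_of_nonneg (le_inf (abs_nonneg x) ha),
    abs_of_nonneg (le_inf (abs_nonneg x) (ha.trans hab))]
  exact inf_le_inf_left _ hab

lemma hasBasis_unbNhdsZero (hτ : IsLocallySolidTop τ) (hA : IsOrderIdeal A) :
    (unbNhdsZero τ A).HasBasis
      (fun p : E × Set E => (p.1 ∈ A ∧ 0 ≤ p.1) ∧ p.2 ∈ @nhds E τ 0 ∧ IsSolid p.2)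
      (fun p => (fun x => |x| ⊓ p.1) ⁻¹' p.2) := by
  refine hasBasis_biInf_of_directed (dom := {a ∈ A | 0 ≤ a}) ⟨0, hA.1, le_rfl⟩ _ _
    (fun a _ => hτ.hasBasis_nhds_zero.comap _) ?_
  rintro a ⟨haA, ha0⟩ b ⟨hbA, hb0⟩
  have hab0 : 0 ≤ a ⊔ b := ha0.trans le_sup_left
  have habA : a ⊔ b ∈ A := by
    refine hA.2.2.2 (hA.2.1 a haA b hbA) ?_
    rw [abs_of_nonneg hab0, abs_of_nonneg (add_nonneg ha0 hb0)]
    exact sup_le (le_add_of_nonneg_right hb0) (le_add_of_nonneg_left ha0)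
  exact ⟨a ⊔ b, ⟨habA, hab0⟩, comap_abs_inf_le_comap_abs_inf hτ ha0 le_sup_left,
    comap_abs_inf_le_comap_abs_inf hτ hb0 le_sup_right⟩

lemma exists_add_mem_of_mem_unbNhdsZero (hτ : IsLocallySolidTop τ) (hA : IsOrderIdeal A)
    {s : Set E} (hs : s ∈ unbNhdsZero τ A) :
    ∃ v ∈ unbNhdsZero τ A, ∀ w ∈ v, ∀ w' ∈ v, w + w' ∈ s := by
  have := hτ.1
  obtain ⟨⟨a, W⟩, ⟨ha, hW, -⟩, hWs⟩ := (hasBasis_unbNhdsZero hτ hA).mem_iff.1 hs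
  obtain ⟨V, hV, hVW⟩ := exists_nhds_zero_half hW
  obtain ⟨U, ⟨hU, hUsolid⟩, hUV⟩ := hτ.hasBasis_nhds_zero.mem_iff.1 hV
  refine ⟨_, (hasBasis_unbNhdsZero hτ hA).mem_of_mem (i := (a, U)) ⟨ha, hU, hUsolid⟩,
    fun w hw w' hw' => hWs ?_⟩
  -- Riesz decomposition: `|w + w'| ⊓ a` splits into a part below `|w| ⊓ a` and one below `|w'| ⊓ a`.
  set z := |w + w'| ⊓ a
  have hz : z ≤ |w| ⊓ a + |w'| ⊓ a := abs_add_inf_le w w' ha.2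
  have h₁ : z ⊓ (|w| ⊓ a) ∈ U := by
    refine hUsolid (x := |w| ⊓ a) hw ?_
    rw [abs_of_nonneg (le_inf (le_inf (abs_nonneg _) ha.2) (le_inf (abs_nonneg _) ha.2)),
      abs_of_nonneg (le_inf (abs_nonneg _) ha.2)]
    exact inf_le_right
  have h₂ : (z - |w| ⊓ a)⁺ ∈ U := by
    refine hUsolid (x := |w'| ⊓ a) hw' ?_
    rw [abs_of_nonneg (posPart_nonneg _), abs_of_nonneg (le_inf (abs_nonneg _) ha.2)]
    exact sup_le (sub_le_iff_le_add'.2 hz) (le_inf (abs_nonneg _) ha.2)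
  have := hVW _ (hUV h₁) _ (hUV h₂)
  rwa [inf_add_posPart_sub] at this

lemma nhds_unbTopology_zero (hτ : IsLocallySolidTop τ) (hA : IsOrderIdeal A) :
    @nhds E (unbTopology τ A) 0 = unbNhdsZero τ A := by
  have hpure : pure ≤ fun x => map (x + ·) (unbNhdsZero τ A) := fun x => by
    simpa using map_mono (m := (x + ·)) (pure_zero_le_unbNhdsZero (τ := τ) (A := A))
  rw [unbTopology, TopologicalSpace.nhds_mkOfNhds _ _ hpure]
  · simp only [zero_add, map_id']
  intro x s hs
  obtain ⟨v, hv, hvs⟩ := exists_add_mem_of_mem_unbNhdsZero hτ hA (mem_map.1 hs)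
  rw [eventually_map]
  filter_upwards [hv] with w hw
  exact mem_map.2 (mem_of_superset hv fun w' hw' => by simpa [add_assoc] using hvs w hw w' hw')

lemma eq_zero_of_forall_smul_mem_of_topBounded (hτ : IsLocallySolidTop τ) (hT1 : @T1Space E τ)
    (hA : IsOrderIdeal A) (hdense : OrderDense A) {S : Set E}
    (hS : TopBounded (unbTopology τ A) S) {z : E} (hz : 0 ≤ z)
    (hray : ∀ c : ℝ, 0 < c → c • z ∈ S) : z = 0 := by
  by_contra hz0
  obtain ⟨y, hyA, hy0, hyz⟩ := hdense z (lt_of_le_of_ne hz (Ne.symm hz0))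
  have hU : (fun v => |v| ⊓ y) ⁻¹' {y}ᶜ ∈ @nhds E (unbTopology τ A) 0 := by
    rw [nhds_unbTopology_zero hτ hA]
    exact mem_iInf_of_mem y <| mem_iInf_of_mem ⟨hyA, hy0.le⟩ <|
      preimage_mem_comap (compl_singleton_mem_nhds hy0.ne)
  obtain ⟨l, hl, hlS⟩ := hS _ hU
  have hz_mem := hlS _ (hray l⁻¹ (inv_pos.2 hl))
  rw [smul_inv_smul₀ hl.ne'] at hz_mem
  exact hz_mem (show |z| ⊓ y = y by rw [abs_of_nonneg hz, inf_eq_right.2 hyz])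

end UnboundedTopology

theorem stmt14_general (τ : TopologicalSpace X)
    (hτ : IsLocallySolidTop τ) (hT2 : @T2Space X τ)
    (A : Set X) (hA : IsOrderIdeal A) (hdense : OrderDense A)
    (hlb : LocallyBoundedTop (unbTopology τ A)) :
    A = Set.univ := by
  have := hτ.2.1
  obtain ⟨V, hV, hVb⟩ := hlb
  rw [nhds_unbTopology_zero hτ hA] at hV
  obtain ⟨⟨a, W⟩, ⟨⟨haA, ha0⟩, hW, hWsolid⟩, hWV⟩ := (hasBasis_unbNhdsZero hτ hA).mem_iff.1 hV
  have hdom : ∀ x : X, 0 ≤ x → ∃ t : ℝ, 0 < t ∧ t • x ≤ a := by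
    intro x hx
    obtain ⟨t, ht, htx⟩ := exists_pos_smul_mem x hW
    refine ⟨t, ht, sub_nonpos.1 (posPart_eq_zero.1 ?_)⟩
    exact eq_zero_of_forall_smul_mem_of_topBounded hτ inferInstance hA hdense hVb
      (posPart_nonneg _) fun c hc =>
        hWV (hWsolid.abs_smul_posPart_sub_inf_mem htx (smul_nonneg ht.le hx) ha0 hc.le)
  refine eq_univ_of_forall fun x => ?_
  obtain ⟨t, ht, htx⟩ := hdom |x| (abs_nonneg x)
  refine hA.2.2.2 (hA.2.2.1 t⁻¹ a haA) ?_
  rw [abs_of_nonneg (smul_nonneg (inv_nonneg.2 ht.le) ha0)]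
  exact (le_inv_smul_iff_of_pos ht).2 htx

/-- if `A` is an order dense ideal and `u_A τ` is locally bounded then
`A = X`. -/
theorem stmt14 (hArch : VLArchimedean X) (τ : TopologicalSpace X)
    (hτ : IsLocallySolidTop τ) (hT2 : @T2Space X τ)
    (A : Set X) (hA : IsOrderIdeal A) (hdense : OrderDense A)
    (hlb : LocallyBoundedTop (unbTopology τ A)) :
    A = Set.univ :=
  stmt14_general τ hτ hT2 A hA hdense hlb
end

section
/- Let X be a vector lattice admitting a minimal topology τ. Then τ is locally bounded if and only if X is finite dimensional. -/
open Filter Set Topology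

variable {X : Type*} [Lattice X] [AddCommGroup X] [Module ℝ X]
  [CovariantClass X X (· + ·) (· ≤ ·)] [PosSMulMono ℝ X]

/-!
A minimal topology `τ` is Hausdorff and locally solid, so for every order dense ideal `A` the
unbounded topology `u_A τ`, whose basic neighbourhoods of zero are the sets `{x | |x| ⊓ |a| ∈ U}`
(`a ∈ A`, `U` a solid `τ`-neighbourhood of zero), is a Hausdorff locally solid topology coarser
than `τ`, hence equal to `τ`. Such a neighbourhood contains the linear subspace `{a}ᵈ`, and a
bounded neighbourhood contains no nonzero subspace; so if `τ` is locally bounded, every order dense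
ideal contains a weak unit.

If `X` is infinite dimensional, it contains a sequence `(e n)` of pairwise disjoint nonzero
vectors. Call an ideal atomic if it is spanned by finitely many pairwise disjoint atoms. By
Hölder's argument an Archimedean ideal without disjoint positive vectors is atomic; atomicity passes
to subideals, and `B` is atomic as soon as `B ∩ {u}ᵈ` and `B ∩ {u}ᵈᵈ` are. Hence every non-atomic
ideal `B` has a nonzero `u ∈ B` with `B ∩ {u}ᵈ` non-atomic, and iterating from `X` produces the
sequence. The ideal of vectors eventually disjoint from `e n` is order dense but contains no weak
unit.

Conversely, a finite-dimensional Hausdorff topological vector space is locally bounded.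
-/

section LatticeOrderedGroup

variable {G : Type*} [Lattice G] [AddCommGroup G] {a b c : G}

def disjointComplement (S : Set G) : Set G := {x | ∀ y ∈ S, |x| ⊓ |y| = 0}

@[simp]
theorem mem_disjointComplement_singleton : a ∈ disjointComplement {b} ↔ |a| ⊓ |b| = 0 := by
  simp [disjointComplement]

theorem inf_eq_zero_of_le (hb : 0 ≤ b) (hc : 0 ≤ c) (hba : b ≤ a) (hac : a ⊓ c = 0) :
    b ⊓ c = 0 :=
  le_antisymm (hac ▸ inf_le_inf_right c hba) (le_inf hb hc)

variable [AddLeftMono G]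

theorem add_eq_sup_of_inf_eq_zero (h : a ⊓ b = 0) : a + b = a ⊔ b := by
  rw [← inf_add_sup, h, zero_add]

theorem eq_zero_of_abs_eq_zero (h : |a| = 0) : a = 0 :=
  le_antisymm (h ▸ le_abs_self a) (neg_nonpos.1 (h ▸ neg_le_abs a))

theorem abs_pos_of_ne_zero (h : a ≠ 0) : 0 < |a| :=
  (abs_nonneg a).lt_of_ne' fun h' => h (eq_zero_of_abs_eq_zero h')

theorem add_inf_le_inf_add_inf_s15 (ha : 0 ≤ a) (hb : 0 ≤ b) (hc : 0 ≤ c) :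
    (a + b) ⊓ c ≤ a ⊓ c + b ⊓ c := by
  rw [← sub_le_iff_le_add, sub_inf]
  refine sup_le (le_inf ?_ ?_) (le_inf ?_ ?_) <;> rw [sub_le_iff_le_add]
  · exact inf_le_left
  · exact le_add_of_le_of_nonneg inf_le_right hb
  · exact le_add_of_nonneg_of_le ha inf_le_right
  · exact le_add_of_le_of_nonneg inf_le_right hc

theorem add_inf_eq_zero (ha : 0 ≤ a) (hb : 0 ≤ b) (hc : 0 ≤ c) (hac : a ⊓ c = 0)
    (hbc : b ⊓ c = 0) : (a + b) ⊓ c = 0 :=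
  le_antisymm (by simpa [hac, hbc] using add_inf_le_inf_add_inf_s15 ha hb hc)
    (le_inf (add_nonneg ha hb) hc)

theorem Finset.sum_inf_eq_zero {ι : Type*} {s : Finset ι} {f : ι → G} (hf : ∀ i ∈ s, 0 ≤ f i)
    (hc : 0 ≤ c) (h : ∀ i ∈ s, f i ⊓ c = 0) : (∑ i ∈ s, f i) ⊓ c = 0 := by
  classical
  induction s using Finset.induction_on with
  | empty => simpa using hc
  | insert i s hi ih =>
    simp only [Finset.mem_insert, forall_eq_or_imp] at hf h
    rw [Finset.sum_insert hi]
    exact add_inf_eq_zero hf.1 (Finset.sum_nonneg hf.2) hc h.1 (ih hf.2 h.2)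

theorem Finset.sum_le_of_pairwise_inf_eq_zero {ι : Type*} {s : Finset ι} {f : ι → G}
    (hf : ∀ i ∈ s, 0 ≤ f i) (hc : 0 ≤ c) (hfc : ∀ i ∈ s, f i ≤ c)
    (hdisj : (s : Set ι).Pairwise fun i j => f i ⊓ f j = 0) : ∑ i ∈ s, f i ≤ c := by
  classical
  induction s using Finset.induction_on with
  | empty => simpa using hc
  | insert i s hi ih =>
    simp only [Finset.mem_insert, forall_eq_or_imp] at hf hfc
    rw [Finset.coe_insert, Set.pairwise_insert] at hdisj
    have hi_disj : (∑ j ∈ s, f j) ⊓ f i = 0 :=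
      Finset.sum_inf_eq_zero hf.2 hf.1 fun j hj =>
        (hdisj.2 j hj fun hji => hi (hji ▸ hj)).2
    rw [Finset.sum_insert hi, add_eq_sup_of_inf_eq_zero (by rwa [inf_comm])]
    exact sup_le hfc.1 (ih hf.2 hfc.2 hdisj.1)

end LatticeOrderedGroup

-- Makes Mathlib's ordered-module lemmas (`smul_le_smul_of_nonneg_right`, ...) available.
instance {G : Type*} [Lattice G] [AddCommGroup G] [AddLeftMono G] : IsOrderedAddMonoid G where
  add_le_add_left _ _ h c := add_le_add_left h c

section VectorLattice

variable {E : Type*} [Lattice E] [AddCommGroup E] [Module ℝ E] [AddLeftMono E] [PosSMulMono ℝ E]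

theorem abs_smul' (c : ℝ) (x : E) : |c • x| = |c| • |x| := by
  have key : ∀ c : ℝ, 0 < c → |c • x| = c • |x| := fun c hc => by
    change c • x ⊔ -(c • x) = c • (x ⊔ -x)
    rw [← smul_neg]
    exact ((OrderIso.smulRight hc).map_sup x (-x)).symm
  rcases lt_trichotomy c 0 with hc | rfl | hc
  · rw [← abs_neg, ← neg_smul, key _ (neg_pos.2 hc), abs_of_neg hc]
  · simp
  · rw [key c hc, abs_of_pos hc]

theorem smul_inf_eq_zero_s15 {x y : E} (hx : 0 ≤ x) (hy : 0 ≤ y) (h : x ⊓ y = 0) {c : ℝ}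
    (hc : 0 ≤ c) : c • x ⊓ y = 0 := by
  have hm : (0 : ℝ) < max c 1 := lt_max_of_lt_right one_pos
  refine le_antisymm ?_ (le_inf (smul_nonneg hc hx) hy)
  calc c • x ⊓ y ≤ max c 1 • x ⊓ max c 1 • y :=
        inf_le_inf (smul_le_smul_of_nonneg_right (le_max_left _ _) hx)
          (le_smul_of_one_le_left hy (le_max_right _ _))
    _ = max c 1 • (x ⊓ y) := ((OrderIso.smulRight hm).map_inf x y).symm
    _ = 0 := by rw [h, smul_zero]

end VectorLattice

section OrderIdeal

variable {E : Type*} [Lattice E] [AddCommGroup E] {A B S : Set E} {x y z : E}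

theorem IsSolid.mem_of_nonneg_of_le [AddLeftMono E] (hA : IsSolid A) (hy : y ∈ A) (hz : 0 ≤ z)
    (hzy : z ≤ y) : z ∈ A :=
  hA hy (by rw [abs_of_nonneg hz]; exact hzy.trans (le_abs_self y))

variable [Module ℝ E]

theorem isOrderIdeal_univ : IsOrderIdeal (univ : Set E) :=
  ⟨trivial, fun _ _ _ _ => trivial, fun _ _ _ => trivial, fun _ _ _ _ => trivial⟩

theorem isOrderIdeal_setOf_eventually {ι : Type*} (l : Filter ι) {I : ι → Set E}
    (hI : ∀ i, IsOrderIdeal (I i)) : IsOrderIdeal {x | ∀ᶠ i in l, x ∈ I i} :=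
  ⟨.of_forall fun i => (hI i).1,
    fun _ hx _ hy => (hx.and hy).mono fun i h => (hI i).2.1 _ h.1 _ h.2,
    fun c _ hx => hx.mono fun i h => (hI i).2.2.1 c _ h,
    fun _ _ hx hyx => hx.mono fun i h => (hI i).2.2.2 h hyx⟩

namespace IsOrderIdeal

theorem abs_mem [AddLeftMono E] (hA : IsOrderIdeal A) (hx : x ∈ A) : |x| ∈ A :=
  hA.2.2.2 hx (abs_abs x).le

theorem inter (hA : IsOrderIdeal A) (hB : IsOrderIdeal B) : IsOrderIdeal (A ∩ B) :=
  ⟨⟨hA.1, hB.1⟩, fun x hx y hy => ⟨hA.2.1 x hx.1 y hy.1, hB.2.1 x hx.2 y hy.2⟩,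
    fun c x hx => ⟨hA.2.2.1 c x hx.1, hB.2.2.1 c x hx.2⟩,
    fun _ _ hx hyx => ⟨hA.2.2.2 hx.1 hyx, hB.2.2.2 hx.2 hyx⟩⟩

def toSubmodule (hA : IsOrderIdeal A) : Submodule ℝ E where
  carrier := A
  zero_mem' := hA.1
  add_mem' hx hy := hA.2.1 _ hx _ hy
  smul_mem' c _ hx := hA.2.2.1 c _ hx

@[simp]
theorem mem_toSubmodule (hA : IsOrderIdeal A) : x ∈ hA.toSubmodule ↔ x ∈ A := Iff.rfl

variable [AddLeftMono E]

theorem posPart_mem (hA : IsOrderIdeal A) (hx : x ∈ A) : x⁺ ∈ A :=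
  hA.2.2.2 hx <| by
    rw [abs_of_nonneg (posPart_nonneg x), ← posPart_add_negPart]
    exact le_add_of_nonneg_right (negPart_nonneg x)

theorem negPart_mem (hA : IsOrderIdeal A) (hx : x ∈ A) : x⁻ ∈ A :=
  hA.2.2.2 hx <| by
    rw [abs_of_nonneg (negPart_nonneg x), ← posPart_add_negPart]
    exact le_add_of_nonneg_left (posPart_nonneg x)

theorem subset_of_forall_nonneg (hA : IsOrderIdeal A) {M : Submodule ℝ E}
    (h : ∀ x ∈ A, 0 ≤ x → x ∈ M) : A ⊆ M := by
  intro x hx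
  rw [← posPart_sub_negPart x]
  exact M.sub_mem (h _ (hA.posPart_mem hx) (posPart_nonneg x))
    (h _ (hA.negPart_mem hx) (negPart_nonneg x))

theorem le_total_of_forall_inf_ne_zero (hA : IsOrderIdeal A)
    (h : ∀ u ∈ A, ∀ v ∈ A, 0 < u → 0 < v → u ⊓ v ≠ 0) (hx : x ∈ A) (hy : y ∈ A) :
    x ≤ y ∨ y ≤ x := by
  by_contra! hxy
  have hd : x - y ∈ A := by simpa [sub_eq_add_neg] using hA.2.1 _ hx _ (hA.2.2.1 (-1) y hy)
  refine h _ (hA.posPart_mem hd) _ (hA.negPart_mem hd) ?_ ?_ (posPart_inf_negPart_eq_zero _)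
  · exact (posPart_nonneg _).lt_of_ne' fun h0 => hxy.1 (sub_nonpos.1 (posPart_eq_zero.1 h0))
  · exact (negPart_nonneg _).lt_of_ne' fun h0 => hxy.2 (sub_nonneg.1 (negPart_eq_zero.1 h0))

end IsOrderIdeal

variable [AddLeftMono E] [PosSMulMono ℝ E]

theorem isOrderIdeal_disjointComplement (S : Set E) : IsOrderIdeal (disjointComplement S) := by
  refine ⟨fun y _ => by simp [abs_nonneg], fun x hx z hz y hy => ?_, fun c x hx y hy => ?_,
    fun x z hx hzx y hy => inf_eq_zero_of_le (abs_nonneg z) (abs_nonneg y) hzx (hx y hy)⟩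
  · exact inf_eq_zero_of_le (abs_nonneg _) (abs_nonneg y) (abs_add_le x z)
      (add_inf_eq_zero (abs_nonneg x) (abs_nonneg z) (abs_nonneg y) (hx y hy) (hz y hy))
  · rw [abs_smul']
    exact smul_inf_eq_zero_s15 (abs_nonneg x) (abs_nonneg y) (hx y hy) (abs_nonneg c)

theorem mem_disjointComplement_span (hx : x ∈ disjointComplement S) :
    x ∈ disjointComplement (Submodule.span ℝ S : Set E) := by
  have hS : S ⊆ (isOrderIdeal_disjointComplement {x}).toSubmodule := fun y hy => by
    simpa [inf_comm] using hx y hy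
  intro y hy
  simpa [inf_comm] using Submodule.span_le.2 hS hy

end OrderIdeal

section Atoms

variable {E : Type*} [Lattice E] [AddCommGroup E] [Module ℝ E] [PosSMulMono ℝ E]
  {B I J : Set E} {C : Finset E} {c u w x : E} {s : ℝ}

theorem VLArchimedean.nonpos_of_forall_le_smul (hArch : VLArchimedean E) (hc : 0 ≤ c)
    (h : ∀ ε : ℝ, 0 < ε → w ≤ ε • c) : w ≤ 0 := by
  refine posPart_eq_zero.1 (hArch _ c (posPart_nonneg w) fun n => ?_)
  rcases n.eq_zero_or_pos with rfl | hn
  · simpa using hc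
  have hn' : (0 : ℝ) < n := Nat.cast_pos.2 hn
  have hw : w⁺ ≤ (n : ℝ)⁻¹ • c :=
    sup_le (h _ (inv_pos.2 hn')) (smul_nonneg (inv_nonneg.2 hn'.le) hc)
  calc n • w⁺ = (n : ℝ) • w⁺ := (Nat.cast_smul_eq_nsmul ℝ n _).symm
    _ ≤ (n : ℝ) • (n : ℝ)⁻¹ • c := smul_le_smul_of_nonneg_left hw hn'.le
    _ = c := smul_inv_smul₀ hn'.ne' c

variable [AddLeftMono E]

-- Junk `0` when the set is unbounded; for `0 < c` and `0 ≤ x` in an Archimedean space the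
-- supremum is attained (`atomCoeff_smul_le`).
noncomputable def atomCoeff (c x : E) : ℝ := sSup {s : ℝ | s • c ≤ x}

theorem bddAbove_setOf_smul_le (hArch : VLArchimedean E) (hc : 0 < c) (x : E) :
    BddAbove {s : ℝ | s • c ≤ x} := by
  obtain ⟨n, hn⟩ : ∃ n : ℕ, ¬n • c ≤ x := by
    by_contra! h
    exact hc.ne' (hArch c x hc.le h)
  refine ⟨n, fun s hs => le_of_not_gt fun hns => hn ?_⟩
  rw [← Nat.cast_smul_eq_nsmul ℝ]
  exact (smul_le_smul_of_nonneg_right hns.le hc.le).trans hs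

theorem le_atomCoeff (hArch : VLArchimedean E) (hc : 0 < c) (h : s • c ≤ x) :
    s ≤ atomCoeff c x :=
  le_csSup (bddAbove_setOf_smul_le hArch hc x) h

theorem atomCoeff_nonneg (hArch : VLArchimedean E) (hc : 0 < c) (hx : 0 ≤ x) :
    0 ≤ atomCoeff c x :=
  le_atomCoeff hArch hc (by simpa using hx)

theorem atomCoeff_smul_le (hArch : VLArchimedean E) (hc : 0 < c) (hx : 0 ≤ x) :
    atomCoeff c x • c ≤ x := by
  refine sub_nonpos.1 (hArch.nonpos_of_forall_le_smul hc.le fun ε hε => ?_)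
  obtain ⟨s, hs, hlt⟩ :=
    exists_lt_of_lt_csSup ⟨0, by simpa using hx⟩ (sub_lt_self (atomCoeff c x) hε)
  calc atomCoeff c x • c - x ≤ atomCoeff c x • c - s • c := sub_le_sub_left hs _
    _ = (atomCoeff c x - s) • c := (sub_smul ..).symm
    _ ≤ ε • c := smul_le_smul_of_nonneg_right (by linarith) hc.le

def IsVLAtom (c : E) : Prop := 0 < c ∧ ∀ z, 0 ≤ z → z ≤ c → ∃ t : ℝ, z = t • c

theorem inf_sub_atomCoeff_smul_eq_zero (hArch : VLArchimedean E) (hc : IsVLAtom c)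
    (hx : 0 ≤ x) : (x - atomCoeff c x • c) ⊓ c = 0 := by
  have hw : 0 ≤ x - atomCoeff c x • c := sub_nonneg.2 (atomCoeff_smul_le hArch hc.1 hx)
  obtain ⟨t, ht⟩ := hc.2 _ (le_inf hw hc.1.le) inf_le_right
  have ht0 : t ≤ 0 := by
    have h : (atomCoeff c x + t) • c ≤ x := by
      rw [add_smul, ← ht, ← le_sub_iff_add_le']
      exact inf_le_left
    linarith [le_atomCoeff hArch hc.1 h]
  rw [ht]
  exact le_antisymm (smul_nonpos_of_nonpos_of_nonneg ht0 hc.1.le) (ht ▸ le_inf hw hc.1.le)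

theorem sum_atomCoeff_smul_le (hArch : VLArchimedean E) (hC : ∀ c ∈ C, IsVLAtom c)
    (hdisj : (C : Set E).Pairwise fun c d => c ⊓ d = 0) (hx : 0 ≤ x) :
    ∑ c ∈ C, atomCoeff c x • c ≤ x := by
  have hterm : ∀ c ∈ C, 0 ≤ atomCoeff c x • c := fun c hc =>
    smul_nonneg (atomCoeff_nonneg hArch (hC c hc).1 hx) (hC c hc).1.le
  refine Finset.sum_le_of_pairwise_inf_eq_zero hterm hx
    (fun c hc => atomCoeff_smul_le hArch (hC c hc).1 hx) (hdisj.imp_on ?_)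
  intro c hc d hd _ hcd
  refine smul_inf_eq_zero_s15 (hC c hc).1.le (hterm d hd) ?_ (atomCoeff_nonneg hArch (hC c hc).1 hx)
  rw [inf_comm]
  exact smul_inf_eq_zero_s15 (hC d hd).1.le (hC c hc).1.le (by rwa [inf_comm])
    (atomCoeff_nonneg hArch (hC d hd).1 hx)

theorem sub_sum_atomCoeff_smul_mem_disjointComplement (hArch : VLArchimedean E)
    (hC : ∀ c ∈ C, IsVLAtom c) (hdisj : (C : Set E).Pairwise fun c d => c ⊓ d = 0)
    (hx : 0 ≤ x) : x - ∑ c ∈ C, atomCoeff c x • c ∈ disjointComplement (C : Set E) := by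
  classical
  intro c hc
  have hr : 0 ≤ x - ∑ d ∈ C, atomCoeff d x • d :=
    sub_nonneg.2 (sum_atomCoeff_smul_le hArch hC hdisj hx)
  rw [abs_of_nonneg hr, abs_of_nonneg (hC c hc).1.le]
  refine inf_eq_zero_of_le hr (hC c hc).1.le ?_ (inf_sub_atomCoeff_smul_eq_zero hArch (hC c hc) hx)
  rw [← Finset.add_sum_erase C _ hc, ← sub_sub]
  exact sub_le_self _ (Finset.sum_nonneg fun d hd =>
    smul_nonneg (atomCoeff_nonneg hArch (hC d (Finset.mem_of_mem_erase hd)).1 hx)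
      (hC d (Finset.mem_of_mem_erase hd)).1.le)

theorem eq_sum_atomCoeff_smul_of_mem_span (hArch : VLArchimedean E) (hC : ∀ c ∈ C, IsVLAtom c)
    (hdisj : (C : Set E).Pairwise fun c d => c ⊓ d = 0) (hx : 0 ≤ x)
    (hxC : x ∈ Submodule.span ℝ (C : Set E)) : x = ∑ c ∈ C, atomCoeff c x • c := by
  set r := x - ∑ c ∈ C, atomCoeff c x • c
  have hr : r ∈ Submodule.span ℝ (C : Set E) := Submodule.sub_mem _ hxC <|
    Submodule.sum_mem _ fun c hc => Submodule.smul_mem _ _ (Submodule.subset_span hc)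
  have hrr := mem_disjointComplement_span
    (sub_sum_atomCoeff_smul_mem_disjointComplement hArch hC hdisj hx) r hr
  rw [inf_idem] at hrr
  exact sub_eq_zero.1 (eq_zero_of_abs_eq_zero hrr)

def HasAtomicBasis (B : Set E) : Prop :=
  ∃ C : Finset E, ↑C ⊆ B ∧ (∀ c ∈ C, IsVLAtom c) ∧
    (C : Set E).Pairwise (fun c d => c ⊓ d = 0) ∧ B ⊆ Submodule.span ℝ (C : Set E)

theorem hasAtomicBasis_of_forall_inf_ne_zero (hArch : VLArchimedean E) (hB : IsOrderIdeal B)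
    (h : ∀ u ∈ B, ∀ v ∈ B, 0 < u → 0 < v → u ⊓ v ≠ 0) : HasAtomicBasis B := by
  by_cases hB0 : B ⊆ {0}
  · refine ⟨∅, by simp, by simp, by simp, fun x hx => ?_⟩
    rw [hB0 hx]
    exact zero_mem _
  obtain ⟨x₀, hx₀B, hx₀⟩ := not_subset.1 hB0
  set c := |x₀|
  have hc : 0 < c := abs_pos_of_ne_zero hx₀
  have hcB : c ∈ B := hB.abs_mem hx₀B
  have key : ∀ y ∈ B, 0 ≤ y → y = atomCoeff c y • c := by
    intro y hy hy0
    -- `B` is totally ordered and the residual `y - atomCoeff c y • c` cannot dominate any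
    -- `ε • c`, so it lies below all of them
    have hr : 0 ≤ y - atomCoeff c y • c := sub_nonneg.2 (atomCoeff_smul_le hArch hc hy0)
    have hrB : y - atomCoeff c y • c ∈ B := by
      simpa [sub_eq_add_neg] using hB.2.1 _ hy _ (hB.2.2.1 (-atomCoeff c y) c hcB)
    refine sub_eq_zero.1 (le_antisymm (hArch.nonpos_of_forall_le_smul hc.le fun ε hε => ?_) hr)
    refine (hB.le_total_of_forall_inf_ne_zero h (hB.2.2.1 ε c hcB) hrB).resolve_left fun hεr => ?_
    have : (atomCoeff c y + ε) • c ≤ y := by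
      rw [add_smul, ← le_sub_iff_add_le']
      exact hεr
    linarith [le_atomCoeff hArch hc this]
  refine ⟨{c}, by simpa using hcB, ?_, by simp, hB.subset_of_forall_nonneg fun y hy hy0 => ?_⟩
  · simp only [Finset.mem_singleton, forall_eq]
    exact ⟨hc, fun z hz hzc => ⟨_, key z (hB.2.2.2.mem_of_nonneg_of_le hcB hz hzc) hz⟩⟩
  · rw [key y hy hy0]
    exact Submodule.smul_mem _ _ (Submodule.subset_span (by simp))

theorem HasAtomicBasis.mono (hArch : VLArchimedean E) (hJ : IsOrderIdeal J) (hJI : J ⊆ I)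
    (hI : HasAtomicBasis I) : HasAtomicBasis J := by
  classical
  obtain ⟨C, -, hC, hdisj, hIC⟩ := hI
  refine ⟨C.filter (· ∈ J), by simp [Set.subset_def], fun c hc => hC c (Finset.mem_filter.1 hc).1,
    hdisj.mono (Finset.coe_subset.2 (Finset.filter_subset _ _)),
    hJ.subset_of_forall_nonneg fun x hx hx0 => ?_⟩
  rw [eq_sum_atomCoeff_smul_of_mem_span hArch hC hdisj hx0 (hIC (hJI hx))]
  refine Submodule.sum_mem _ fun c hc => ?_
  rcases (atomCoeff_nonneg hArch (hC c hc).1 hx0).eq_or_lt with h0 | hpos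
  · rw [← h0, zero_smul]
    exact zero_mem _
  refine Submodule.smul_mem _ _ (Submodule.subset_span (Finset.mem_filter.2 ⟨hc, ?_⟩))
  -- `c` lies below the multiple `(atomCoeff c x)⁻¹ • x` of `x ∈ J`
  exact hJ.2.2.2.mem_of_nonneg_of_le (hJ.2.2.1 _ _ hx) (hC c hc).1.le
    ((le_inv_smul_iff_of_pos hpos).2 (atomCoeff_smul_le hArch (hC c hc).1 hx0))

theorem HasAtomicBasis.of_inter (hArch : VLArchimedean E) (hB : IsOrderIdeal B) (hu : u ∈ B)
    (h₁ : HasAtomicBasis (B ∩ disjointComplement {u}))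
    (h₂ : HasAtomicBasis (B ∩ disjointComplement (disjointComplement {u}))) :
    HasAtomicBasis B := by
  classical
  obtain ⟨C₁, hC₁B, hC₁, hdisj₁, hBC₁⟩ := h₁
  obtain ⟨C₂, hC₂B, hC₂, hdisj₂, hBC₂⟩ := h₂
  have hcross : ∀ c₁ ∈ C₁, ∀ c₂ ∈ C₂, c₁ ⊓ c₂ = 0 := fun c₁ h₁ c₂ h₂ => by
    have := (hC₂B h₂).2 c₁ (hC₁B h₁).2
    rwa [abs_of_pos (hC₁ c₁ h₁).1, abs_of_pos (hC₂ c₂ h₂).1, inf_comm] at this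
  refine ⟨C₁ ∪ C₂, ?_, fun c hc => (Finset.mem_union.1 hc).elim (hC₁ c) (hC₂ c), ?_, ?_⟩
  · rw [Finset.coe_union]
    exact union_subset (hC₁B.trans inter_subset_left) (hC₂B.trans inter_subset_left)
  · rw [Finset.coe_union]
    exact Set.pairwise_union.2 ⟨hdisj₁, hdisj₂, fun c₁ h₁ c₂ h₂ _ =>
      ⟨hcross c₁ h₁ c₂ h₂, by rw [inf_comm]; exact hcross c₁ h₁ c₂ h₂⟩⟩
  refine hB.subset_of_forall_nonneg fun x hx hx0 => ?_
  have hsum : ∑ c ∈ C₂, atomCoeff c x • c ∈ Submodule.span ℝ (C₂ : Set E) :=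
    Submodule.sum_mem _ fun c hc => Submodule.smul_mem _ _ (Submodule.subset_span hc)
  -- the part of `x` off the atoms of `C₂` is disjoint from `u`, so it is spanned by `C₁`
  have hr : x - ∑ c ∈ C₂, atomCoeff c x • c ∈ Submodule.span ℝ (C₁ : Set E) := by
    refine hBC₁ ⟨?_, ?_⟩
    · exact hB.toSubmodule.sub_mem hx (hB.toSubmodule.sum_mem fun c hc =>
        hB.toSubmodule.smul_mem _ (hC₂B hc).1)
    · have hdisj := mem_disjointComplement_span
        (sub_sum_atomCoeff_smul_mem_disjointComplement hArch hC₂ hdisj₂ hx0)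
      exact fun _ hv => (mem_singleton_iff.1 hv) ▸ hdisj u (hBC₂ ⟨hu, fun y hy => by
        simpa [inf_comm] using hy⟩)
  rw [← sub_add_cancel x (∑ c ∈ C₂, atomCoeff c x • c), Finset.coe_union]
  exact Submodule.add_mem _ (Submodule.span_mono subset_union_left hr)
    (Submodule.span_mono subset_union_right hsum)

theorem exists_not_hasAtomicBasis_inter (hArch : VLArchimedean E) (hB : IsOrderIdeal B)
    (h : ¬HasAtomicBasis B) :
    ∃ u ∈ B, u ≠ 0 ∧ ¬HasAtomicBasis (B ∩ disjointComplement {u}) := by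
  by_contra! H
  refine h ?_
  by_cases hpair : ∃ u ∈ B, ∃ v ∈ B, 0 < u ∧ 0 < v ∧ u ⊓ v = 0
  · obtain ⟨u, hu, v, hv, hu0, hv0, huv⟩ := hpair
    have hsub : B ∩ disjointComplement (disjointComplement {u}) ⊆ B ∩ disjointComplement {v} :=
      fun x hx => ⟨hx.1, by
        simpa using hx.2 v (by simpa [abs_of_pos hu0, abs_of_pos hv0, inf_comm] using huv)⟩
    exact .of_inter hArch hB hu (H u hu hu0.ne')
      ((H v hv hv0.ne').mono hArch (hB.inter (isOrderIdeal_disjointComplement _)) hsub)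
  · push Not at hpair
    exact hasAtomicBasis_of_forall_inf_ne_zero hArch hB hpair

end Atoms

theorem exists_seq_of_forall_exists_inter {α : Type*} {P : Set α → Prop} {Q : α → Prop}
    {D : α → Set α} (h₀ : P univ) (h : ∀ B, P B → ∃ u ∈ B, Q u ∧ P (B ∩ D u)) :
    ∃ e : ℕ → α, (∀ n, Q (e n)) ∧ ∀ m n, m < n → e n ∈ D (e m) := by
  obtain ⟨u₀, -⟩ := h univ h₀
  have : Nonempty α := ⟨u₀⟩
  choose! f hfB hfQ hfP using h
  let B : ℕ → Set α := fun n => Nat.rec univ (fun _ B => B ∩ D (f B)) n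
  have hP : ∀ n, P (B n) := fun n => Nat.rec h₀ (fun _ ih => hfP _ ih) n
  have hB : Antitone B := antitone_nat_of_succ_le fun _ => inter_subset_left
  exact ⟨fun n => f (B n), fun n => hfQ _ (hP n), fun m n hmn => (hB hmn (hfB _ (hP n))).2⟩

theorem exists_seq_pairwise_disjoint {E : Type*} [Lattice E] [AddCommGroup E] [Module ℝ E]
    [AddLeftMono E] [PosSMulMono ℝ E] (hArch : VLArchimedean E) (hE : ¬FiniteDimensional ℝ E) :
    ∃ e : ℕ → E, (∀ n, e n ≠ 0) ∧ Pairwise fun m n => |e m| ⊓ |e n| = 0 := by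
  have huniv : ¬HasAtomicBasis (univ : Set E) := fun ⟨C, _, _, _, hC⟩ =>
    hE ⟨⟨C, top_unique fun x _ => hC (mem_univ x)⟩⟩
  obtain ⟨e, he, hdisj⟩ := exists_seq_of_forall_exists_inter
    (P := fun B => IsOrderIdeal B ∧ ¬HasAtomicBasis B) (D := fun u => disjointComplement {u})
    ⟨isOrderIdeal_univ, huniv⟩ fun B hB => by
      obtain ⟨u, hu, hu0, hnot⟩ := exists_not_hasAtomicBasis_inter hArch hB.1 hB.2
      exact ⟨u, hu, hu0, hB.1.inter (isOrderIdeal_disjointComplement _), hnot⟩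
  refine ⟨e, he, fun m n hmn => ?_⟩
  rcases hmn.lt_or_gt with h | h
  · simpa [inf_comm] using hdisj m n h
  · simpa using hdisj n m h

section UnboundedTopology

open scoped Pointwise

variable {E : Type*} [Lattice E] [AddCommGroup E] {τ : TopologicalSpace E} {A : Set E}

variable (τ A) in
def unbSets : Set (Set E) :=
  {S | ∃ a ∈ A, ∃ U ∈ @nhds E τ 0, IsSolid U ∧ S = {x | |x| ⊓ |a| ∈ U}}

variable [AddLeftMono E]

theorem isSolid_of_mem_unbSets {S : Set E} (hS : S ∈ unbSets τ A) : IsSolid S := by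
  obtain ⟨a, -, U, -, hU, rfl⟩ := hS
  exact fun x y hx hyx => hU.mem_of_nonneg_of_le hx (le_inf (abs_nonneg y) (abs_nonneg a))
    (inf_le_inf_right _ hyx)

theorem zero_mem_of_mem_unbSets {S : Set E} (hS : S ∈ unbSets τ A) : (0 : E) ∈ S := by
  obtain ⟨a, -, U, hU, -, rfl⟩ := hS
  simpa [abs_nonneg] using @mem_of_mem_nhds E τ _ _ hU

variable [Module ℝ E]

theorem mem_nhds_of_mem_unbSets (hτ : IsLocallySolidTop τ) {S : Set E} (hS : S ∈ unbSets τ A) :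
    S ∈ @nhds E τ 0 := by
  let _ := τ
  obtain ⟨a, -, U, hU, -, rfl⟩ := hS
  obtain ⟨W, hW, hWs, hWU⟩ := hτ.2.2 U hU
  refine mem_of_superset hW fun x hx => hWU (hWs hx ?_)
  rw [abs_of_nonneg (le_inf (abs_nonneg x) (abs_nonneg a))]
  exact inf_le_left

theorem exists_unbSets_subset_inter (hτ : IsLocallySolidTop τ) (hA : IsOrderIdeal A)
    {S₁ S₂ : Set E} (h₁ : S₁ ∈ unbSets τ A) (h₂ : S₂ ∈ unbSets τ A) :
    ∃ S ∈ unbSets τ A, S ⊆ S₁ ∩ S₂ := by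
  let _ := τ
  obtain ⟨a, ha, U, hU, -, rfl⟩ := h₁
  obtain ⟨b, hb, V, hV, -, rfl⟩ := h₂
  obtain ⟨W, hW, hWs, hWUV⟩ := hτ.2.2 _ (inter_mem hU hV)
  have hab : 0 ≤ |a| + |b| := add_nonneg (abs_nonneg a) (abs_nonneg b)
  refine ⟨_, ⟨|a| + |b|, hA.2.1 _ (hA.abs_mem ha) _ (hA.abs_mem hb), W, hW, hWs, rfl⟩,
    fun x hx => ?_⟩
  rw [abs_of_nonneg hab] at hx
  exact ⟨(hWUV (hWs.mem_of_nonneg_of_le hx (le_inf (abs_nonneg x) (abs_nonneg a))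
      (inf_le_inf_left _ (le_add_of_nonneg_right (abs_nonneg b))))).1,
    (hWUV (hWs.mem_of_nonneg_of_le hx (le_inf (abs_nonneg x) (abs_nonneg b))
      (inf_le_inf_left _ (le_add_of_nonneg_left (abs_nonneg a))))).2⟩

theorem exists_unbSets_add_subset (hτ : IsLocallySolidTop τ) {S : Set E}
    (hS : S ∈ unbSets τ A) : ∃ V ∈ unbSets τ A, V + V ⊆ S := by
  let _ := τ
  have := hτ.1
  obtain ⟨a, ha, U, hU, hUs, rfl⟩ := hS
  obtain ⟨W, hW, hWU⟩ := exists_nhds_zero_half hU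
  obtain ⟨W', hW', hW's, hW'W⟩ := hτ.2.2 W hW
  refine ⟨_, ⟨a, ha, W', hW', hW's, rfl⟩, Set.add_subset_iff.2 fun x hx y hy => ?_⟩
  refine hUs.mem_of_nonneg_of_le (hWU _ (hW'W hx) _ (hW'W hy))
    (le_inf (abs_nonneg _) (abs_nonneg a)) ?_
  exact (inf_le_inf_right _ (abs_add_le x y)).trans
    (add_inf_le_inf_add_inf_s15 (abs_nonneg x) (abs_nonneg y) (abs_nonneg a))

variable [PosSMulMono ℝ E]

theorem exists_smul_subset_of_mem_unbSets {S : Set E} (hS : S ∈ unbSets τ A) :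
    ∃ V ∈ 𝓝 (0 : ℝ), ∃ W ∈ unbSets τ A, V • W ⊆ S := by
  refine ⟨Metric.ball 0 1, Metric.ball_mem_nhds 0 one_pos, S, hS, ?_⟩
  obtain ⟨a, -, U, -, hU, rfl⟩ := hS
  rintro _ ⟨c, hc, x, hx, rfl⟩
  refine hU.mem_of_nonneg_of_le hx (le_inf (abs_nonneg _) (abs_nonneg a))
    (inf_le_inf_right _ ?_)
  rw [abs_smul']
  exact smul_le_of_le_one_left (abs_nonneg x) (mem_ball_zero_iff.1 hc).le

theorem exists_unbSets_subset_preimage_smul (hτ : IsLocallySolidTop τ) (c : ℝ) {S : Set E}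
    (hS : S ∈ unbSets τ A) : ∃ V ∈ unbSets τ A, V ⊆ (fun x => c • x) ⁻¹' S := by
  let _ := τ
  have := hτ.2.1
  obtain ⟨a, ha, U, hU, hUs, rfl⟩ := hS
  have hm : (0 : ℝ) < max |c| 1 := lt_max_of_lt_right one_pos
  have hmU : (fun x : E => max |c| 1 • x) ⁻¹' U ∈ 𝓝 0 :=
    (continuous_const_smul _).continuousAt.preimage_mem_nhds (by rwa [smul_zero])
  obtain ⟨W, hW, hWs, hWU⟩ := hτ.2.2 _ hmU
  refine ⟨_, ⟨a, ha, W, hW, hWs, rfl⟩, fun x hx => hUs.mem_of_nonneg_of_le (hWU hx)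
    (le_inf (abs_nonneg _) (abs_nonneg a)) ?_⟩
  calc |c • x| ⊓ |a| ≤ max |c| 1 • |x| ⊓ max |c| 1 • |a| := by
        rw [abs_smul']
        exact inf_le_inf (smul_le_smul_of_nonneg_right (le_max_left _ _) (abs_nonneg x))
          (le_smul_of_one_le_left (abs_nonneg a) (le_max_right _ _))
    _ = max |c| 1 • (|x| ⊓ |a|) := ((OrderIso.smulRight hm).map_inf _ _).symm

theorem eventually_smul_mem_of_mem_unbSets (hτ : IsLocallySolidTop τ) (x₀ : E) {S : Set E}
    (hS : S ∈ unbSets τ A) : ∀ᶠ c in 𝓝 (0 : ℝ), c • x₀ ∈ S := by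
  let _ := τ
  have := hτ.2.1
  obtain ⟨a, -, U, hU, hUs, rfl⟩ := hS
  have hcont : Continuous fun c : ℝ => |c| • |x₀| := continuous_abs.smul continuous_const
  have h : Tendsto (fun c : ℝ => |c| • |x₀|) (𝓝 0) (𝓝 0) := by simpa using hcont.tendsto 0
  filter_upwards [h hU] with c hc
  refine hUs.mem_of_nonneg_of_le hc (le_inf (abs_nonneg _) (abs_nonneg a)) ?_
  exact (abs_smul' c x₀).le.trans' inf_le_left

variable (τ A) in
-- The paper's unbounded topology `u_A τ` (compare `unbTopology`), given by a basis at zero.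
def unbModuleFilterBasis (hτ : IsLocallySolidTop τ) (hA : IsOrderIdeal A) :
    ModuleFilterBasis ℝ E where
  toAddGroupFilterBasis := addGroupFilterBasisOfComm (unbSets τ A)
    ⟨_, 0, hA.1, univ, @univ_mem _ (@nhds E τ 0), fun _ _ _ _ => trivial, rfl⟩
    (fun _ _ => exists_unbSets_subset_inter hτ hA) (fun _ => zero_mem_of_mem_unbSets)
    (fun _ => exists_unbSets_add_subset hτ)
    (fun S hS => ⟨S, hS, fun x hx => isSolid_of_mem_unbSets hS hx (abs_neg x).le⟩)
  smul' := exists_smul_subset_of_mem_unbSets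
  smul_left' c _ := exists_unbSets_subset_preimage_smul hτ c
  smul_right' x₀ _ := eventually_smul_mem_of_mem_unbSets hτ x₀

variable (hτ : IsLocallySolidTop τ) (hA : IsOrderIdeal A)

theorem unbModuleFilterBasis_nhds_zero_hasBasis :
    HasBasis (@nhds E (unbModuleFilterBasis τ A hτ hA).topology 0) (· ∈ unbSets τ A) id :=
  (unbModuleFilterBasis τ A hτ hA).toAddGroupFilterBasis.nhds_zero_hasBasis

theorem isLocallySolidTop_unbModuleFilterBasis_topology :
    IsLocallySolidTop (unbModuleFilterBasis τ A hτ hA).topology := by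
  refine ⟨(unbModuleFilterBasis τ A hτ hA).toAddGroupFilterBasis.isTopologicalAddGroup,
    (unbModuleFilterBasis τ A hτ hA).continuousSMul, fun U hU => ?_⟩
  obtain ⟨S, hS, hSU⟩ := (unbModuleFilterBasis_nhds_zero_hasBasis hτ hA).mem_iff.1 hU
  exact ⟨S, (unbModuleFilterBasis_nhds_zero_hasBasis hτ hA).mem_of_mem hS,
    isSolid_of_mem_unbSets hS, hSU⟩

theorem le_unbModuleFilterBasis_topology : τ ≤ (unbModuleFilterBasis τ A hτ hA).topology := by
  let σ := (unbModuleFilterBasis τ A hτ hA).topology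
  have hσ : @IsTopologicalAddGroup E σ _ :=
    (unbModuleFilterBasis τ A hτ hA).toAddGroupFilterBasis.isTopologicalAddGroup
  have h0 : @nhds E τ 0 ≤ @nhds E σ 0 :=
    (unbModuleFilterBasis_nhds_zero_hasBasis hτ hA).ge_iff.2 fun S hS =>
      mem_nhds_of_mem_unbSets hτ hS
  refine (le_iff_nhds _ _).2 fun x => ?_
  rw [← @map_add_left_nhds_zero E τ _ hτ.1 x, ← @map_add_left_nhds_zero E σ _ hσ x]
  exact map_mono h0

theorem t2Space_unbModuleFilterBasis_topology (hT : @T2Space E τ) (hdense : OrderDense A) :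
    @T2Space E (unbModuleFilterBasis τ A hτ hA).topology := by
  let _ := τ
  refine @IsTopologicalAddGroup.t2Space_of_zero_sep E (unbModuleFilterBasis τ A hτ hA).topology _
    (unbModuleFilterBasis τ A hτ hA).toAddGroupFilterBasis.isTopologicalAddGroup fun x hx => ?_
  obtain ⟨y, hyA, hy0, hyx⟩ := hdense |x| (abs_pos_of_ne_zero hx)
  obtain ⟨U, hU, hUs, hUy⟩ := hτ.2.2 _ (isOpen_compl_singleton.mem_nhds hy0.ne)
  refine ⟨_, (unbModuleFilterBasis_nhds_zero_hasBasis hτ hA).mem_of_mem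
    ⟨y, hyA, U, hU, hUs, rfl⟩, fun hxU => hUy hxU ?_⟩
  exact (show |x| ⊓ |y| = y by rw [abs_of_pos hy0, inf_eq_right.2 hyx])

theorem exists_disjointComplement_subset_of_mem_nhds {V : Set E}
    (hV : V ∈ @nhds E (unbModuleFilterBasis τ A hτ hA).topology 0) :
    ∃ a ∈ A, disjointComplement {a} ⊆ V := by
  obtain ⟨_, ⟨a, ha, U, hU, -, rfl⟩, hSV⟩ :=
    (unbModuleFilterBasis_nhds_zero_hasBasis hτ hA).mem_iff.1 hV
  refine ⟨a, ha, fun x hx => hSV ?_⟩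
  change |x| ⊓ |a| ∈ U
  rw [mem_disjointComplement_singleton.1 hx]
  exact @mem_of_mem_nhds E τ _ _ hU

end UnboundedTopology

theorem TopBounded.eq_zero_of_forall_smul_mem {E : Type*} [AddCommGroup E] [Module ℝ E]
    {τ : TopologicalSpace E} {V : Set E} (hV : TopBounded τ V) (hT : @T2Space E τ) {y : E}
    (hy : ∀ t : ℝ, t • y ∈ V) : y = 0 := by
  let _ := τ
  by_contra hy0
  obtain ⟨l, hl, hlV⟩ := hV _ (isOpen_compl_singleton.mem_nhds (Ne.symm hy0))
  exact hlV _ (hy l⁻¹) (smul_inv_smul₀ hl.ne' y)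

def IsWeakUnit {E : Type*} [Lattice E] [AddCommGroup E] (a : E) : Prop :=
  disjointComplement {a} ⊆ {0}

theorem IsMinimalTop.exists_isWeakUnit_mem {E : Type*} [Lattice E] [AddCommGroup E]
    [Module ℝ E] [AddLeftMono E] [PosSMulMono ℝ E] {τ : TopologicalSpace E} {A : Set E}
    (hmin : IsMinimalTop τ) (hlb : LocallyBoundedTop τ) (hA : IsOrderIdeal A)
    (hdense : OrderDense A) : ∃ a ∈ A, IsWeakUnit a := by
  obtain ⟨hτ, hT, hcoarsest⟩ := hmin
  have hστ : (unbModuleFilterBasis τ A hτ hA).topology = τ :=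
    hcoarsest _ (isLocallySolidTop_unbModuleFilterBasis_topology hτ hA)
      (t2Space_unbModuleFilterBasis_topology hτ hA hT hdense)
      (le_unbModuleFilterBasis_topology hτ hA)
  obtain ⟨V, hV, hVb⟩ := hlb
  obtain ⟨a, ha, haV⟩ := exists_disjointComplement_subset_of_mem_nhds hτ hA (hστ ▸ hV)
  exact ⟨a, ha, fun y hy => hVb.eq_zero_of_forall_smul_mem hT fun t =>
    haV ((isOrderIdeal_disjointComplement _).2.2.1 t y hy)⟩

theorem exists_isVonNBounded_mem_nhds_zero {F : Type*} [AddCommGroup F] [Module ℝ F]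
    [TopologicalSpace F] [IsTopologicalAddGroup F] [ContinuousSMul ℝ F] [T2Space F]
    [FiniteDimensional ℝ F] : ∃ V ∈ 𝓝 (0 : F), Bornology.IsVonNBounded ℝ V := by
  let e : F ≃L[ℝ] (Fin (Module.finrank ℝ F) → ℝ) :=
    (Module.finBasis ℝ F).equivFun.toContinuousLinearEquiv
  refine ⟨e ⁻¹' Metric.ball 0 1,
    e.continuous.continuousAt.preimage_mem_nhds (by simpa using Metric.ball_mem_nhds 0 one_pos), ?_⟩
  rw [← e.image_symm_eq_preimage]
  exact (NormedSpace.isVonNBounded_ball ℝ _ 1).image e.symm.toContinuousLinearMap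

theorem topBounded_of_isVonNBounded {E : Type*} [AddCommGroup E] [Module ℝ E]
    [τ : TopologicalSpace E] {S : Set E} (hS : Bornology.IsVonNBounded ℝ S) :
    TopBounded τ S := by
  intro U hU
  obtain ⟨ε, hε, hεU⟩ :=
    Metric.eventually_nhds_iff.1 ((hS hU).eventually_nhds_zero (mem_of_mem_nhds hU))
  refine ⟨ε / 2, half_pos hε, fun x hx => hεU ?_ hx⟩
  rw [Real.dist_eq, sub_zero, abs_of_pos (half_pos hε)]
  exact half_lt_self hε

theorem locallyBoundedTop_of_finiteDimensional {E : Type*} [Lattice E] [AddCommGroup E]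
    [Module ℝ E] {τ : TopologicalSpace E} (hτ : IsLocallySolidTop τ) (hT : @T2Space E τ)
    [FiniteDimensional ℝ E] : LocallyBoundedTop τ := by
  let _ := τ
  have := hτ.1
  have := hτ.2.1
  obtain ⟨V, hV, hVb⟩ := exists_isVonNBounded_mem_nhds_zero (F := E)
  exact ⟨V, hV, topBounded_of_isVonNBounded hVb⟩

section EventuallyDisjoint

variable {E : Type*} [Lattice E] [AddCommGroup E] {e : ℕ → E}

def eventuallyDisjoint (e : ℕ → E) : Set E := {x | ∀ᶠ n in atTop, x ∈ disjointComplement {e n}}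

theorem not_isWeakUnit_of_mem_eventuallyDisjoint (he : ∀ n, e n ≠ 0) {a : E}
    (ha : a ∈ eventuallyDisjoint e) : ¬IsWeakUnit a := fun hunit => by
  obtain ⟨n, hn⟩ := ha.exists
  exact he n (hunit (by simpa [inf_comm] using hn))

variable [AddLeftMono E]

theorem orderDense_eventuallyDisjoint (hdisj : Pairwise fun m n => |e m| ⊓ |e n| = 0) :
    OrderDense (eventuallyDisjoint e) := by
  intro x hx
  by_cases h : ∃ n, x ⊓ |e n| ≠ 0
  · obtain ⟨n, hn⟩ := h
    have hxn : 0 ≤ x ⊓ |e n| := le_inf hx.le (abs_nonneg _)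
    refine ⟨x ⊓ |e n|, ?_, hxn.lt_of_ne' hn, inf_le_left⟩
    filter_upwards [eventually_gt_atTop n] with m hm
    rw [mem_disjointComplement_singleton, abs_of_nonneg hxn]
    exact inf_eq_zero_of_le hxn (abs_nonneg _) inf_le_right (hdisj hm.ne)
  · push Not at h
    exact ⟨x, .of_forall fun n => by simpa [abs_of_pos hx] using h n, hx, le_rfl⟩

variable [Module ℝ E] [PosSMulMono ℝ E]

theorem isOrderIdeal_eventuallyDisjoint (e : ℕ → E) : IsOrderIdeal (eventuallyDisjoint e) :=
  isOrderIdeal_setOf_eventually atTop fun n => isOrderIdeal_disjointComplement {e n}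

end EventuallyDisjoint

/-- a minimal topology is locally bounded iff `X` is finite
dimensional. -/
theorem stmt15 (hArch : VLArchimedean X) (τ : TopologicalSpace X) (hmin : IsMinimalTop τ) :
    LocallyBoundedTop τ ↔ FiniteDimensional ℝ X := by
  refine ⟨fun hlb => ?_, fun _ => locallyBoundedTop_of_finiteDimensional hmin.1 hmin.2.1⟩
  by_contra hfin
  obtain ⟨e, he, hdisj⟩ := exists_seq_pairwise_disjoint hArch hfin
  obtain ⟨a, ha, hunit⟩ := hmin.exists_isWeakUnit_mem hlb (isOrderIdeal_eventuallyDisjoint e)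
    (orderDense_eventuallyDisjoint hdisj)
  exact not_isWeakUnit_of_mem_eventuallyDisjoint he ha hunit
end

section
/- Let X be a vector lattice having a countable order basis and the countable sup property. Then uo-convergence on X is sequential: whenever (x_α)_{α∈A} is a net in X that uo-converges to 0, there exists an increasing sequence of indices α_n ∈ A such that the sequence (x_{α_n}) uo-converges to 0. -/
/-!
Enumerate the countable order basis as `f k` and put `g m = m • (|f 0| ⊔ ⋯ ⊔ |f m|)`. The
elements `x` with `|x| = sup_m |x| ⊓ g m` form a band containing the basis, hence all of `X`; so
`u - u ⊓ g m ↓ 0`, and `|y| ⊓ u ≤ |y| ⊓ g m + (u - u ⊓ g m)` reduces uo-convergence to the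
countably many truncations `|x_γ| ⊓ g m`. By the countable sup property the order convergence of
each is witnessed by a decreasing sequence `(e m j)_j` with infimum `0`, giving countably many tail
conditions `|x_γ| ⊓ g m ≤ e m j`, which a diagonal choice of indices `α n` meets for all
`m, j ≤ n`. Then `|x_{α n}| ⊓ u ≤ min_{m ≤ n} (e m n + (u - u ⊓ g m))`, and the right-hand side
decreases to `0`.
-/

open Filter Set Topology

variable {X : Type*} [Lattice X] [AddCommGroup X] [Module ℝ X]
  [CovariantClass X X (· + ·) (· ≤ ·)] [PosSMulMono ℝ X]

open scoped Pointwise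

section LatticeOrderedGroup

variable {E : Type*} [Lattice E] [AddCommGroup E] [AddLeftMono E]

theorem IsLUB.range_inf_left {ι : Type*} {f : ι → E} {s : E} (hs : IsLUB (range f) s) (a : E) :
    IsLUB (range fun i => a ⊓ f i) (a ⊓ s) := by
  refine ⟨forall_mem_range.2 fun i => inf_le_inf_left a (hs.1 ⟨i, rfl⟩), fun b hb => ?_⟩
  -- `a ⊓ s - (s - f i) ≤ a ⊓ f i ≤ b`, so `s - (a ⊓ s - b)` bounds every `f i`
  have hbound : ∀ i, f i ≤ s - (a ⊓ s - b) := fun i => by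
    have hfi : f i ≤ s := hs.1 ⟨i, rfl⟩
    have h : a ⊓ s - (s - f i) ≤ b := by
      refine le_trans (le_inf ?_ ?_) (hb ⟨i, rfl⟩)
      · exact (sub_le_self _ (sub_nonneg.2 hfi)).trans inf_le_left
      · simpa only [sub_sub_cancel] using sub_le_sub_right (inf_le_right : a ⊓ s ≤ s) (s - f i)
    rw [sub_le_comm] at h
    exact le_sub_comm.1 h
  simpa using hs.2 (forall_mem_range.2 hbound)

theorem IsLUB.range_inf_of_le {ι : Type*} {g : ι → E} {P z : E}
    (hP : IsLUB (range fun i => P ⊓ g i) P) (hz : z ≤ P) :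
    IsLUB (range fun i => z ⊓ g i) z := by
  simpa only [← inf_assoc, inf_eq_left.2 hz] using hP.range_inf_left z

theorem IsLUB.isGLB_range_sub {ι : Type*} {f : ι → E} {s : E} (hs : IsLUB (range f) s) :
    IsGLB (range fun i => s - f i) 0 := by
  refine ⟨forall_mem_range.2 fun i => sub_nonneg.2 (hs.1 ⟨i, rfl⟩), fun b hb => ?_⟩
  have h : s ≤ s - b := hs.2 (forall_mem_range.2 fun i => le_sub_comm.1 (hb ⟨i, rfl⟩))
  simpa using h

theorem IsGLB.range_add_const {ι : Type*} {f : ι → E} {a : E} (ha : IsGLB (range f) a) (c : E) :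
    IsGLB (range fun i => f i + c) (a + c) := by
  rw [← (OrderIso.addRight c).isGLB_image', ← range_comp] at ha
  exact ha

theorem inf_le_inf_add_sub_inf (a u v : E) : a ⊓ u ≤ a ⊓ v + (u - u ⊓ v) := by
  have h : a ⊓ u + u ⊓ v - u ≤ a ⊓ v := by
    refine le_inf ?_ ?_ <;> rw [sub_le_iff_le_add]
    · exact add_le_add inf_le_left inf_le_left
    · exact (add_le_add inf_le_right inf_le_right).trans_eq (add_comm _ _)
  calc a ⊓ u = (a ⊓ u + u ⊓ v - u) + (u - u ⊓ v) := by abel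
    _ ≤ a ⊓ v + (u - u ⊓ v) := add_le_add_left h _

theorem CountableSupProperty.exists_countable_isGLB (hcsp : CountableSupProperty E) {D : Set E}
    (hD : D.Nonempty) {a : E} (ha : IsGLB D a) :
    ∃ C ⊆ D, C.Countable ∧ C.Nonempty ∧ IsGLB C a := by
  obtain ⟨d, hd⟩ := hD
  obtain ⟨C, hCD, hC, hCa⟩ := hcsp (-D) (-a) ⟨-d, by simpa using hd⟩ ha.neg
  -- inserting `d ∈ D` keeps the infimum and makes the set nonempty even if `C = ∅`
  refine ⟨insert d (-C), insert_subset hd (neg_subset.2 hCD), ?_, insert_nonempty _ _, ?_⟩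
  · simpa [← image_neg_eq_neg] using (hC.image Neg.neg).insert d
  · rw [← inf_eq_right.2 (ha.1 hd)]
    exact (isGLB_neg.2 (by simpa using hCa)).insert d

end LatticeOrderedGroup

theorem DirectedOn.exists_antitone_isGLB {α : Type*} [Preorder α] {D C : Set α}
    (hD : DirectedOn (· ≥ ·) D) (hCD : C ⊆ D) (hC : C.Countable) (hCne : C.Nonempty) {a : α}
    (haD : a ∈ lowerBounds D) (hCa : IsGLB C a) :
    ∃ e : ℕ → α, (∀ n, e n ∈ D) ∧ Antitone e ∧ IsGLB (range e) a := by
  obtain ⟨c, rfl⟩ := hC.exists_eq_range hCne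
  choose next hnext_mem hnext_le_self hnext_le_c using
    fun (p : D) (n : ℕ) => hD p p.2 (c n) (hCD ⟨n, rfl⟩)
  let e : ℕ → D := fun n => Nat.rec (motive := fun _ => D) ⟨c 0, hCD ⟨0, rfl⟩⟩
    (fun n p => ⟨next p (n + 1), hnext_mem _ _⟩) n
  have he_le : ∀ n, (e n).1 ≤ c n := fun n => by
    cases n with
    | zero => exact le_rfl
    | succ n => exact hnext_le_c (e n) (n + 1)
  refine ⟨fun n => (e n).1, fun n => (e n).2, antitone_nat_of_succ_le fun n => hnext_le_self _ _,
    ?_⟩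
  refine ⟨forall_mem_range.2 fun n => haD (e n).2, fun b hb => hCa.2 ?_⟩
  exact forall_mem_range.2 fun n => (hb ⟨n, rfl⟩).trans (he_le n)

theorem CountableSupProperty.exists_antitone_isGLB {E : Type*} [Lattice E] [AddCommGroup E]
    [AddLeftMono E] (hcsp : CountableSupProperty E) {D : Set E} (hD : D.Nonempty)
    (hdir : DirectedOn (· ≥ ·) D) {a : E} (ha : IsGLB D a) :
    ∃ e : ℕ → E, (∀ n, e n ∈ D) ∧ Antitone e ∧ IsGLB (range e) a := by
  obtain ⟨C, hCD, hC, hCne, hCa⟩ := hcsp.exists_countable_isGLB hD ha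
  exact hdir.exists_antitone_isGLB hCD hC hCne ha.1 hCa

theorem orderNull_iff_exists_antitone {E : Type*} [Lattice E] [AddCommGroup E] [AddLeftMono E]
    (hcsp : CountableSupProperty E) {ι : Type*} [Preorder ι] {y : ι → E} :
    OrderNull y ↔ ∃ e : ℕ → E, Antitone e ∧ IsGLB (range e) 0 ∧
      ∀ j, ∃ α₀, ∀ α, α₀ ≤ α → |y α| ≤ e j := by
  constructor
  · rintro ⟨D, hD, hdir, hD0, hdom⟩
    obtain ⟨e, heD, he, he0⟩ := hcsp.exists_antitone_isGLB hD hdir hD0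
    exact ⟨e, he, he0, fun j => hdom _ (heD j)⟩
  · rintro ⟨e, he, he0, hdom⟩
    refine ⟨range e, range_nonempty e, ?_, he0, forall_mem_range.2 hdom⟩
    rintro _ ⟨i, rfl⟩ _ ⟨j, rfl⟩
    exact ⟨e (i ⊔ j), mem_range_self _, he le_sup_left, he le_sup_right⟩

theorem exists_monotone_forall_le {ι : Type*} [Preorder ι] [IsDirectedOrder ι]
    (b : ℕ → ℕ → ι) : ∃ α : ℕ → ι, Monotone α ∧ ∀ m n, m ≤ n → b m n ≤ α n := by
  classical
  have : Nonempty ι := ⟨b 0 0⟩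
  have hstep : ∀ (a : ι) (n : ℕ), ∃ c, a ≤ c ∧ ∀ m ≤ n, b m n ≤ c := fun a n => by
    obtain ⟨c, hc⟩ := (insert a ((Finset.range (n + 1)).image (b · n))).exists_le
    refine ⟨c, hc a (Finset.mem_insert_self _ _), fun m hm => hc _ ?_⟩
    exact Finset.mem_insert_of_mem (Finset.mem_image_of_mem _ (Finset.mem_range_succ_iff.2 hm))
  choose next hnext_ge hnext_le using hstep
  let α : ℕ → ι := fun n =>
    Nat.rec (motive := fun _ => ι) (next (b 0 0) 0) (fun n a => next a (n + 1)) n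
  refine ⟨α, monotone_nat_of_le_succ fun n => hnext_ge _ _, fun m n hmn => ?_⟩
  cases n <;> exact hnext_le _ _ m hmn

section DiagInf

variable {α : Type*} [Lattice α] {F : ℕ → ℕ → α}

def diagInf (F : ℕ → ℕ → α) (n : ℕ) : α :=
  (Finset.range (n + 1)).inf' Finset.nonempty_range_add_one fun m => F m n

theorem diagInf_le {m n : ℕ} (hmn : m ≤ n) : diagInf F n ≤ F m n :=
  Finset.inf'_le _ (Finset.mem_range_succ_iff.2 hmn)

theorem le_diagInf {a : α} {n : ℕ} (h : ∀ m ≤ n, a ≤ F m n) : a ≤ diagInf F n :=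
  Finset.le_inf' _ _ fun m hm => h m (Finset.mem_range_succ_iff.1 hm)

theorem antitone_diagInf (hF : ∀ m, Antitone (F m)) : Antitone (diagInf F) :=
  antitone_nat_of_succ_le fun n =>
    le_diagInf fun m hm => (diagInf_le (hm.trans n.le_succ)).trans (hF m n.le_succ)

theorem isGLB_range_diagInf (hF : ∀ m, Antitone (F m)) {a : ℕ → α}
    (ha : ∀ m, IsGLB (range (F m)) (a m)) {c : α} (hc : IsGLB (range a) c) :
    IsGLB (range (diagInf F)) c := by
  refine ⟨forall_mem_range.2 fun n => le_diagInf fun m _ =>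
    (hc.1 ⟨m, rfl⟩).trans ((ha m).1 ⟨n, rfl⟩), fun b hb => hc.2 ?_⟩
  refine forall_mem_range.2 fun m => (ha m).2 (forall_mem_range.2 fun j => ?_)
  calc b ≤ diagInf F (m ⊔ j) := hb ⟨_, rfl⟩
    _ ≤ F m (m ⊔ j) := diagInf_le le_sup_left
    _ ≤ F m j := hF m le_sup_right

end DiagInf

theorem abs_smul_le {𝕜 E : Type*} [Ring 𝕜] [LinearOrder 𝕜] [IsOrderedRing 𝕜] [Lattice E]
    [AddCommGroup E] [Module 𝕜 E] [PosSMulMono 𝕜 E] (t : 𝕜) (x : E) : |t • x| ≤ |t| • |x| := by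
  rcases le_or_gt 0 t with ht | ht
  · rw [abs_of_nonneg ht]
    refine abs_le'.2 ⟨smul_le_smul_of_nonneg_left (le_abs_self x) ht, ?_⟩
    rw [← smul_neg]
    exact smul_le_smul_of_nonneg_left (neg_le_abs x) ht
  · rw [abs_of_neg ht]
    refine abs_le'.2 ⟨?_, ?_⟩
    · rw [← neg_smul_neg]
      exact smul_le_smul_of_nonneg_left (neg_le_abs x) (neg_nonneg.2 ht.le)
    · rw [← neg_smul]
      exact smul_le_smul_of_nonneg_left (le_abs_self x) (neg_nonneg.2 ht.le)

theorem isLUB_range_smul_inf {E : Type*} [Lattice E] [AddCommGroup E] [Module ℝ E]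
    [PosSMulMono ℝ E] {g : ℕ → E} (hgsmul : ∀ (t : ℝ) m, ∃ M, t • g m ≤ g M) {P : E} {t : ℝ}
    (ht : 0 < t) (hP : IsLUB (range fun m => P ⊓ g m) P) :
    IsLUB (range fun m => (t • P) ⊓ g m) (t • P) := by
  refine ⟨forall_mem_range.2 fun m => inf_le_left, fun b hb => ?_⟩
  refine (le_inv_smul_iff_of_pos ht).1 (hP.2 (forall_mem_range.2 fun m => ?_))
  obtain ⟨M, hM⟩ := hgsmul t m
  refine (le_inv_smul_iff_of_pos ht).2 ?_
  calc t • (P ⊓ g m) ≤ (t • P) ⊓ (t • g m) :=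
        le_inf (smul_le_smul_of_nonneg_left inf_le_left ht.le)
          (smul_le_smul_of_nonneg_left inf_le_right ht.le)
    _ ≤ (t • P) ⊓ g M := inf_le_inf_left _ hM
    _ ≤ b := hb ⟨M, rfl⟩

theorem isLUB_of_forall_isLUB_range_inf {α : Type*} [Lattice α] {g : ℕ → α} {D : Set α} {s : α}
    (hD : ∀ d ∈ D, IsLUB (range fun m => d ⊓ g m) d) (hs : IsLUB D s) :
    IsLUB (range fun m => s ⊓ g m) s := by
  refine ⟨forall_mem_range.2 fun m => inf_le_left, fun b hb => hs.2 fun d hd => (hD d hd).2 ?_⟩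
  exact forall_mem_range.2 fun m => (inf_le_inf_right _ (hs.1 hd)).trans (hb ⟨m, rfl⟩)

section SeqBand

variable {E : Type*} [Lattice E] [AddCommGroup E] {g : ℕ → E}

def seqBand (g : ℕ → E) : Set E := {x | IsLUB (range fun m => |x| ⊓ g m) |x|}

theorem mem_seqBand_of_abs_le_seq {y : E} {m : ℕ} (h : |y| ≤ g m) : y ∈ seqBand g :=
  IsGreatest.isLUB ⟨⟨m, inf_eq_left.2 h⟩, forall_mem_range.2 fun _ => inf_le_left⟩

theorem neg_mem_seqBand {x : E} (hx : x ∈ seqBand g) : -x ∈ seqBand g := by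
  change IsLUB _ |-x|
  rwa [abs_neg]

variable [AddLeftMono E]

theorem zero_mem_seqBand {m : ℕ} (hm : 0 ≤ g m) : (0 : E) ∈ seqBand g :=
  mem_seqBand_of_abs_le_seq (by rwa [abs_zero])

theorem mem_seqBand_of_abs_le {P y : E} (hP : IsLUB (range fun m => P ⊓ g m) P) (hy : |y| ≤ P) :
    y ∈ seqBand g :=
  hP.range_inf_of_le hy

theorem mem_seqBand_iff_of_nonneg {y : E} (hy : 0 ≤ y) :
    y ∈ seqBand g ↔ IsLUB (range fun m => y ⊓ g m) y := by
  change IsLUB _ |y| ↔ _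
  rw [abs_of_nonneg hy]

theorem isLUB_range_add_inf (hgadd : ∀ m m', ∃ M, g m + g m' ≤ g M) {P Q : E}
    (hP : IsLUB (range fun m => P ⊓ g m) P) (hQ : IsLUB (range fun m => Q ⊓ g m) Q) :
    IsLUB (range fun m => (P + Q) ⊓ g m) (P + Q) := by
  refine ⟨forall_mem_range.2 fun m => inf_le_left, fun b hb => ?_⟩
  have hQb : ∀ m, Q ⊓ g m ≤ b - P := fun m => by
    refine le_sub_comm.1 (hP.2 (forall_mem_range.2 fun m' => ?_))
    obtain ⟨M, hM⟩ := hgadd m' m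
    rw [le_sub_iff_add_le]
    calc P ⊓ g m' + Q ⊓ g m ≤ (P + Q) ⊓ (g m' + g m) :=
          le_inf (add_le_add inf_le_left inf_le_left) (add_le_add inf_le_right inf_le_right)
      _ ≤ (P + Q) ⊓ g M := inf_le_inf_left _ hM
      _ ≤ b := hb ⟨M, rfl⟩
  rw [add_comm]
  exact le_sub_iff_add_le.1 (hQ.2 (forall_mem_range.2 hQb))

theorem add_mem_seqBand (hgadd : ∀ m m', ∃ M, g m + g m' ≤ g M) {x y : E} (hx : x ∈ seqBand g)
    (hy : y ∈ seqBand g) : x + y ∈ seqBand g :=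
  mem_seqBand_of_abs_le (isLUB_range_add_inf hgadd hx hy) (abs_add_le x y)

theorem sub_mem_seqBand (hgadd : ∀ m m', ∃ M, g m + g m' ≤ g M) {x y : E} (hx : x ∈ seqBand g)
    (hy : y ∈ seqBand g) : x - y ∈ seqBand g := by
  rw [sub_eq_add_neg]
  exact add_mem_seqBand hgadd hx (neg_mem_seqBand hy)

theorem mem_seqBand_of_isLUB (hg0 : ∀ m, 0 ≤ g m) (hgadd : ∀ m m', ∃ M, g m + g m' ≤ g M)
    {D : Set E} (hD : D ⊆ seqBand g) {s : E} (hs : IsLUB D s) : s ∈ seqBand g := by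
  rcases D.eq_empty_or_nonempty with rfl | ⟨d₀, hd₀⟩
  · have hs0 : s = 0 :=
      le_antisymm (hs.2 (by simp)) ((le_add_iff_nonneg_right s).1 (hs.2 (by simp)))
    exact hs0 ▸ zero_mem_seqBand (hg0 0)
  -- for `y ≥ 0` membership drops the `|·|`, and that form passes to suprema
  -- (`isLUB_of_forall_isLUB_range_inf`); so shift `D` by `d₀` into the positive cone
  set D' := (fun d => d ⊔ d₀ - d₀) '' D
  have hD' : ∀ d' ∈ D', IsLUB (range fun m => d' ⊓ g m) d' := by
    rintro _ ⟨d, hd, rfl⟩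
    refine (mem_seqBand_iff_of_nonneg (sub_nonneg.2 le_sup_right)).1 ?_
    refine mem_seqBand_of_abs_le (sub_mem_seqBand hgadd (hD hd) (hD hd₀)) ?_
    simpa using abs_sup_sub_sup_le_abs d d₀ d₀
  have hsD' : IsLUB D' (s - d₀) := by
    refine ⟨?_, fun b hb => ?_⟩
    · rintro _ ⟨d, hd, rfl⟩
      exact sub_le_sub_right (sup_le (hs.1 hd) (hs.1 hd₀)) d₀
    · refine sub_le_iff_le_add.2 (hs.2 fun d hd => ?_)
      exact le_sup_left.trans (sub_le_iff_le_add.1 (hb ⟨d, hd, rfl⟩))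
  have hsd₀ : s - d₀ ∈ seqBand g := (mem_seqBand_iff_of_nonneg (sub_nonneg.2 (hs.1 hd₀))).2
    (isLUB_of_forall_isLUB_range_inf hD' hsD')
  simpa using add_mem_seqBand hgadd hsd₀ (hD hd₀)

variable [Module ℝ E] [PosSMulMono ℝ E]

theorem smul_mem_seqBand (hg0 : ∀ m, 0 ≤ g m) (hgsmul : ∀ (t : ℝ) m, ∃ M, t • g m ≤ g M)
    (t : ℝ) {x : E} (hx : x ∈ seqBand g) : t • x ∈ seqBand g := by
  rcases eq_or_ne t 0 with rfl | ht
  · exact (zero_smul ℝ x).symm ▸ zero_mem_seqBand (hg0 0)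
  · exact mem_seqBand_of_abs_le (isLUB_range_smul_inf hgsmul (abs_pos.2 ht) hx)
      (abs_smul_le t x)

theorem isBand_seqBand (hg0 : ∀ m, 0 ≤ g m) (hgadd : ∀ m m', ∃ M, g m + g m' ≤ g M)
    (hgsmul : ∀ (t : ℝ) m, ∃ M, t • g m ≤ g M) : IsBand (seqBand g) :=
  ⟨⟨zero_mem_seqBand (hg0 0),
    fun _ hx _ hy => add_mem_seqBand hgadd hx hy, fun t _ hx => smul_mem_seqBand hg0 hgsmul t hx,
    fun _ _ hx hyx => mem_seqBand_of_abs_le hx hyx⟩,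
    fun _ hD _ hs => mem_seqBand_of_isLUB hg0 hgadd hD hs⟩

end SeqBand

section CountableOrderBasis

variable {E : Type*} [Lattice E] [AddCommGroup E] [AddLeftMono E] [Module ℝ E] [PosSMulMono ℝ E]

theorem Set.Countable.exists_seq_subset_seqBand {A : Set E} (hA : A.Countable) :
    ∃ g : ℕ → E, (∀ m, 0 ≤ g m) ∧ (∀ m m', ∃ M, g m + g m' ≤ g M) ∧
      (∀ (t : ℝ) m, ∃ M, t • g m ≤ g M) ∧ A ⊆ seqBand g := by
  obtain ⟨f, hAf⟩ := countable_iff_exists_subset_range.1 hA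
  set c := partialSups fun k => |f k|
  have hc0 : ∀ m, 0 ≤ c m := fun m =>
    (abs_nonneg (f 0)).trans ((le_partialSups _ 0).trans (c.monotone m.zero_le))
  refine ⟨fun m => m • c m, fun m => nsmul_nonneg (hc0 m) m, fun m m' => ⟨m + m', ?_⟩,
    fun t m => ⟨(⌈t⌉₊ + 1) * m, ?_⟩, ?_⟩
  · show m • c m + m' • c m' ≤ (m + m') • c (m + m')
    rw [add_nsmul]
    exact add_le_add (nsmul_le_nsmul_right (c.monotone (m.le_add_right m')) m)
      (nsmul_le_nsmul_right (c.monotone (m'.le_add_left m)) m')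
  · have hsmul : t • (m • c m) ≤ ((⌈t⌉₊ + 1 : ℕ) : ℝ) • (m • c m) := by
      rw [← sub_nonneg, ← sub_smul]
      refine smul_nonneg (sub_nonneg.2 ?_) (nsmul_nonneg (hc0 m) m)
      exact (Nat.le_ceil t).trans (by norm_num)
    rw [Nat.cast_smul_eq_nsmul, ← mul_nsmul'] at hsmul
    exact hsmul.trans
      (nsmul_le_nsmul_right (c.monotone (Nat.le_mul_of_pos_left m (Nat.succ_pos _))) _)
  · rintro _ ha
    obtain ⟨k, rfl⟩ := hAf ha
    refine mem_seqBand_of_abs_le_seq (m := k + 1) ?_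
    calc |f k| ≤ c (k + 1) := (le_partialSups _ k).trans (c.monotone k.le_succ)
      _ ≤ (k + 1) • c (k + 1) := by
        simpa using nsmul_le_nsmul_left (hc0 (k + 1)) (Nat.succ_pos k)

theorem CountableOrderBasis.exists_seq_isLUB_abs_inf {A : Set E} (hA : CountableOrderBasis A) :
    ∃ g : ℕ → E, (∀ m, 0 ≤ g m) ∧ ∀ x, IsLUB (range fun m => |x| ⊓ g m) |x| := by
  obtain ⟨g, hg0, hgadd, hgsmul, hAg⟩ := hA.1.exists_seq_subset_seqBand
  have hx : ∀ x, x ∈ bandGenerated A := fun x => hA.2 ▸ mem_univ x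
  exact ⟨g, hg0, fun x => hx x _ ⟨isBand_seqBand hg0 hgadd hgsmul, hAg⟩⟩

end CountableOrderBasis

theorem stmt16_general
    (hbasis : ∃ A : Set X, CountableOrderBasis A) (hcsp : CountableSupProperty X)
    {ι : Type*} [Preorder ι] [IsDirected ι (· ≤ ·)]
    (x : ι → X) (hx : UoNull x) :
    ∃ α : ℕ → ι, Monotone α ∧ UoNull fun n => x (α n) := by
  obtain ⟨A, hA⟩ := hbasis
  obtain ⟨g, hg0, hg⟩ := hA.exists_seq_isLUB_abs_inf
  have hxg : ∀ m, ∃ e : ℕ → X, Antitone e ∧ IsGLB (range e) 0 ∧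
      ∀ j, ∃ γ₀, ∀ γ, γ₀ ≤ γ → |x γ| ⊓ g m ≤ e j := fun m => by
    simpa only [abs_of_nonneg (le_inf (abs_nonneg _) (hg0 m))] using
      (orderNull_iff_exists_antitone hcsp).1 (hx (g m) (hg0 m))
  choose e he he0 γ hγ using hxg
  obtain ⟨α, hα, hγα⟩ := exists_monotone_forall_le γ
  refine ⟨α, hα, fun u hu => ?_⟩
  set F : ℕ → ℕ → X := fun m j => e m j + (u - u ⊓ g m)
  have hF : ∀ m, Antitone (F m) := fun m => (he m).add_const _
  have hFglb : ∀ m, IsGLB (range (F m)) (u - u ⊓ g m) := fun m => by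
    simpa using (he0 m).range_add_const (u - u ⊓ g m)
  have hdom : ∀ n, |x (α n)| ⊓ u ≤ diagInf F n := fun n =>
    le_diagInf fun m hmn => (inf_le_inf_add_sub_inf _ u (g m)).trans
      (add_le_add_left (hγ m n (α n) (hγα m n hmn)) _)
  refine (orderNull_iff_exists_antitone hcsp).2 ⟨diagInf F, antitone_diagInf hF,
    isGLB_range_diagInf hF hFglb (abs_of_nonneg hu ▸ hg u).isGLB_range_sub,
    fun j => ⟨j, fun n hjn => ?_⟩⟩
  rw [abs_of_nonneg (le_inf (abs_nonneg _) hu)]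
  exact (hdom n).trans (antitone_diagInf hF hjn)

/-- if `X` has a countable order basis and the countable sup property,
then every uo-null net has a uo-null "subsequence" along an increasing sequence of
indices. -/
theorem stmt16 (hArch : VLArchimedean X)
    (hbasis : ∃ A : Set X, CountableOrderBasis A) (hcsp : CountableSupProperty X)
    {ι : Type*} [Preorder ι] [IsDirected ι (· ≤ ·)] [Nonempty ι]
    (x : ι → X) (hx : UoNull x) :
    ∃ α : ℕ → ι, Monotone α ∧ UoNull fun n => x (α n) :=
  stmt16_general hbasis hcsp x hx
end

section
/- Let (Ω,Σ,μ) be a semi-finite measure space. Then the vector lattice L_0(μ) of μ-a.e. equivalence classes of real-valued measurable functions on Ω, ordered a.e. pointwise, has the countable sup property if and only if μ is σ-finite. -/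
open Filter Set Topology ENNReal

variable {X : Type*} [Lattice X] [AddCommGroup X] [Module ℝ X]
  [CovariantClass X X (· + ·) (· ≤ ·)] [PosSMulMono ℝ X]

/-! For s-finite `μ` pick a finite measure `ν` with the same null sets; then
`f ↦ ∫ arctan f dν` is a bounded monotone functional on `L₀(μ)`. Given `S` with supremum `x`,
a sequence of finite suprema of `S` along which this functional approaches its supremum involves
only countably many elements of `S`, and any upper bound `b` of those dominates `S`: for `s ∈ S`
the positive part of `arctan s - arctan b` has integral below every increment of the functional,
hence vanishes.

Conversely, on a semi-finite space the indicators of sets of finite measure have supremum `1`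
in `L₀(μ)`; a countable subfamily with the same supremum covers `Ω` up to a null set, so `μ` is
σ-finite. -/

theorem Monotone.max_sub_zero_le_sub_max {α β : Type*} [LinearOrder α] [AddCommGroup β]
    [LinearOrder β] [IsOrderedAddMonoid β] {f : α → β} (hf : Monotone f) {x b : α} (s : α)
    (hxb : x ≤ b) : max (f s - f b) 0 ≤ f (max x s) - f x :=
  max_le (sub_le_sub (hf (le_max_right x s)) (hf hxb)) (sub_nonneg.2 (hf (le_max_left x s)))

theorem exists_countable_subset_forall_sup_lt {X : Type*} [SemilatticeSup X] {S : Set X}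
    (hne : S.Nonempty) (hbdd : BddAbove S) {φ : X → ℝ} (hφ : Monotone φ) :
    ∃ C ⊆ S, C.Countable ∧ ∀ ε > 0, ∃ g ∈ lowerBounds (upperBounds C),
      ∀ s ∈ S, φ (g ⊔ s) < φ g + ε := by
  set M := sSup (φ '' supClosure S)
  have hbddφ : BddAbove (φ '' supClosure S) := by
    obtain ⟨x, hx⟩ := hbdd
    rw [← upperBounds_supClosure] at hx
    exact ⟨φ x, forall_mem_image.2 fun t ht => hφ (hx ht)⟩
  have hneφ : (φ '' supClosure S).Nonempty := (hne.mono subset_supClosure).image φ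
  have happrox : ∀ n : ℕ, ∃ F : Set X, F ⊆ S ∧ F.Finite ∧
      ∃ t ∈ supClosure F, M < φ t + 1 / (n + 1) := by
    intro n
    obtain ⟨_, ⟨_, ⟨F, hF, hFS, rfl⟩, rfl⟩, hlt⟩ :=
      exists_lt_of_lt_csSup hneφ (sub_lt_self M (Nat.one_div_pos_of_nat (n := n)))
    exact ⟨F, hFS, F.finite_toSet, _, finsetSup'_mem_supClosure hF (f := id) fun i hi => hi,
      by linarith⟩
  choose F hFS hFfin t ht hMt using happrox
  refine ⟨⋃ n, F n, iUnion_subset hFS, countable_iUnion fun n => (hFfin n).countable,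
    fun ε hε => ?_⟩
  obtain ⟨n, hn⟩ := exists_nat_one_div_lt hε
  refine ⟨t n, fun b hb => ?_, fun s hs => ?_⟩
  · have hb' := upperBounds_mono_set (subset_iUnion F n) hb
    rw [← upperBounds_supClosure] at hb'
    exact hb' (ht n)
  · have : φ (t n ⊔ s) ≤ M := le_csSup hbddφ <| mem_image_of_mem φ <|
      supClosed_supClosure (supClosure_mono (hFS n) (ht n)) (subset_supClosure hs)
    linarith [hMt n]

namespace MeasureTheory

variable {Ω : Type*} [MeasurableSpace Ω] {μ ν : Measure Ω}

def Measure.IsSemiFinite (μ : Measure Ω) : Prop :=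
  ∀ E : Set Ω, MeasurableSet E → μ E = ∞ →
    ∃ F : Set Ω, MeasurableSet F ∧ F ⊆ E ∧ 0 < μ F ∧ μ F < ∞

theorem integrable_arctan_comp [IsFiniteMeasure ν] {f : Ω → ℝ}
    (hf : AEStronglyMeasurable f ν) : Integrable (fun ω => Real.arctan (f ω)) ν :=
  .of_bound (Real.continuous_arctan.comp_aestronglyMeasurable hf) (Real.pi / 2) <|
    .of_forall fun ω => (abs_lt.2 (Real.arctan_mem_Ioo (f ω))).le

theorem monotone_integral_arctan [IsFiniteMeasure ν] (hνμ : ν ≪ μ) :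
    Monotone fun f : Ω →ₘ[μ] ℝ => ∫ ω, Real.arctan (f ω) ∂ν := fun f g hfg =>
  integral_mono_ae (integrable_arctan_comp f.stronglyMeasurable.aestronglyMeasurable)
    (integrable_arctan_comp g.stronglyMeasurable.aestronglyMeasurable) <| by
      filter_upwards [hνμ.ae_le (AEEqFun.coeFn_le.2 hfg)] with ω hω
      exact Real.arctan_strictMono.monotone hω

/- The positive part of `arctan s - arctan b` is dominated by every increment
`arctan (g ⊔ s) - arctan g` with `g ≤ b`, hence has integral zero. -/
theorem le_of_forall_integral_arctan_sup_lt [IsFiniteMeasure ν] (hν : ae ν = ae μ)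
    {s b : Ω →ₘ[μ] ℝ} (h : ∀ ε > 0, ∃ g ≤ b,
      ∫ ω, Real.arctan ((g ⊔ s) ω) ∂ν < ∫ ω, Real.arctan (g ω) ∂ν + ε) : s ≤ b := by
  have hint (f : Ω →ₘ[μ] ℝ) : Integrable (fun ω => Real.arctan (f ω)) ν :=
    integrable_arctan_comp f.stronglyMeasurable.aestronglyMeasurable
  set c : Ω → ℝ := fun ω => max (Real.arctan (s ω) - Real.arctan (b ω)) 0
  have hc : Integrable c ν := ((hint s).sub (hint b)).pos_part
  have hc_le (g : Ω →ₘ[μ] ℝ) (hgb : g ≤ b) :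
      ∫ ω, c ω ∂ν ≤ ∫ ω, Real.arctan ((g ⊔ s) ω) ∂ν - ∫ ω, Real.arctan (g ω) ∂ν := by
    rw [← integral_sub (hint _) (hint g)]
    refine integral_mono_ae hc ((hint _).sub (hint g)) ?_
    rw [hν]
    filter_upwards [AEEqFun.coeFn_sup g s, AEEqFun.coeFn_le.2 hgb] with ω hsup hgb
    rw [hsup]
    exact Real.arctan_strictMono.monotone.max_sub_zero_le_sub_max (s ω) hgb
  have hc0 : ∫ ω, c ω ∂ν = 0 := by
    refine le_antisymm (le_of_forall_pos_lt_add fun ε hε => ?_)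
      (integral_nonneg fun ω => le_max_right _ _)
    obtain ⟨g, hgb, hg⟩ := h ε hε
    linarith [hc_le g hgb]
  have hc_ae := (integral_eq_zero_iff_of_nonneg (fun ω => le_max_right _ _) hc).1 hc0
  rw [hν] at hc_ae
  rw [← AEEqFun.coeFn_le]
  filter_upwards [hc_ae] with ω hω
  exact Real.arctan_strictMono.le_iff_le.1 (sub_nonpos.1 (max_eq_right_iff.1 hω))

theorem countableSupProperty_of_sFinite (μ : Measure Ω) [SFinite μ] :
    CountableSupProperty (Ω →ₘ[μ] ℝ) := by
  intro S x hne hlub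
  obtain ⟨C, hCS, hC, happrox⟩ := exists_countable_subset_forall_sup_lt hne ⟨x, hlub.1⟩
    (monotone_integral_arctan (toFinite_absolutelyContinuous μ))
  refine ⟨C, hCS, hC, fun c hc => hlub.1 (hCS hc), fun b hb => hlub.2 fun s hs => ?_⟩
  refine le_of_forall_integral_arctan_sup_lt ae_toFinite fun ε hε => ?_
  obtain ⟨g, hg, hgs⟩ := happrox ε hε
  exact ⟨g, hg hb, hgs s hs⟩

namespace AEEqFun

noncomputable def indicatorOne (μ : Measure Ω) {E : Set Ω} (hE : MeasurableSet E) :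
    Ω →ₘ[μ] ℝ :=
  mk (E.indicator 1) (stronglyMeasurable_one.indicator hE).aestronglyMeasurable

variable {E F : Set Ω} (hE : MeasurableSet E)

theorem coeFn_indicatorOne : ⇑(indicatorOne μ hE) =ᵐ[μ] E.indicator 1 := coeFn_mk _ _

theorem indicatorOne_mono (hF : MeasurableSet F) (hEF : E ⊆ F) :
    indicatorOne μ hE ≤ indicatorOne μ hF := by
  rw [← coeFn_le]
  filter_upwards [coeFn_indicatorOne hE, coeFn_indicatorOne hF] with ω hEω hFω
  rw [hEω, hFω]
  exact indicator_le_indicator_of_subset hEF (fun _ => zero_le_one) ω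

theorem indicatorOne_le_one : indicatorOne μ hE ≤ 1 := by
  rw [← coeFn_le]
  filter_upwards [coeFn_indicatorOne hE, coeFn_one (β := ℝ)] with ω hEω h1
  rw [hEω, h1]
  exact indicator_le_self' (fun _ _ => zero_le_one) ω

theorem ae_mem_of_one_le_indicatorOne (h : 1 ≤ indicatorOne μ hE) : ∀ᵐ ω ∂μ, ω ∈ E := by
  filter_upwards [coeFn_le.2 h, coeFn_indicatorOne hE, coeFn_one (β := ℝ)] with ω hω hEω h1
  by_contra hωE
  rw [hEω, h1, indicator_of_notMem hωE] at hω
  exact zero_lt_one.not_ge hω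

/- If `b < 1` on a set of positive measure, semi-finiteness yields a subset of finite positive
measure whose indicator is not below `b`. -/
theorem one_le_of_forall_indicatorOne_le (hμ : μ.IsSemiFinite)
    {b : Ω →ₘ[μ] ℝ} (h : ∀ E (hE : MeasurableSet E), μ E < ∞ → indicatorOne μ hE ≤ b) :
    1 ≤ b := by
  set E := {ω | b ω < 1}
  have hE : MeasurableSet E := measurableSet_lt b.stronglyMeasurable.measurable measurable_const
  suffices μ E = 0 by
    rw [← coeFn_le]
    filter_upwards [measure_eq_zero_iff_ae_notMem.1 this, coeFn_one (β := ℝ)] with ω hω h1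
    rw [h1]
    exact not_lt.1 hω
  by_contra hE0
  obtain ⟨F, hF, hFE, hF0, hFfin⟩ : ∃ F, MeasurableSet F ∧ F ⊆ E ∧ 0 < μ F ∧ μ F < ∞ := by
    rcases eq_top_or_lt_top (μ E) with htop | hfin
    · exact hμ E hE htop
    · exact ⟨E, hE, subset_rfl, pos_iff_ne_zero.2 hE0, hfin⟩
  refine hF0.ne' (measure_eq_zero_iff_ae_notMem.2 ?_)
  filter_upwards [coeFn_le.2 (h F hF hFfin), coeFn_indicatorOne hF] with ω hω hFω hωF
  rw [hFω, indicator_of_mem hωF] at hω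
  exact not_le.2 (hFE hωF) hω

end AEEqFun

open AEEqFun in
theorem sigmaFinite_of_countableSupProperty (hμ : μ.IsSemiFinite)
    (h : CountableSupProperty (Ω →ₘ[μ] ℝ)) : SigmaFinite μ := by
  set S := {f | ∃ E, ∃ hE : MeasurableSet E, μ E < ∞ ∧ indicatorOne μ hE = f}
  have hS : IsLUB S 1 := by
    refine ⟨?_, fun b hb => one_le_of_forall_indicatorOne_le hμ fun E hE hEfin =>
      hb ⟨E, hE, hEfin, rfl⟩⟩
    rintro _ ⟨E, hE, -, rfl⟩
    exact indicatorOne_le_one hE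
  obtain ⟨C, hCS, hC, hC1⟩ := h S 1 ⟨_, ∅, .empty, by simp, rfl⟩ hS
  choose E hE hEfin hEC using fun f (hf : f ∈ C) => hCS hf
  have : Countable C := hC.to_subtype
  set U := ⋃ f : C, E f f.2
  have hU : MeasurableSet U := .iUnion fun f => hE f f.2
  have hUae : ∀ᵐ ω ∂μ, ω ∈ U := by
    refine ae_mem_of_one_le_indicatorOne hU (hC1.2 fun f hf => ?_)
    rw [← hEC f hf]
    exact indicatorOne_mono _ hU (subset_iUnion (fun f : C => E f f.2) ⟨f, hf⟩)
  refine Measure.sigmaFinite_of_countable (S := insert Uᶜ (range fun f : C => E f f.2))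
    ((countable_range _).insert _) ?_ ?_
  · rintro _ (rfl | ⟨f, rfl⟩)
    · exact (mem_ae_iff.1 hUae).trans_lt zero_lt_top
    · exact hEfin f f.2
  · rw [sUnion_insert, sUnion_range, compl_union_self]

end MeasureTheory

/-- for a semi-finite measure, `L₀(μ)` has the countable sup property iff
`μ` is σ-finite. -/
theorem stmt17 {Ω : Type*} [MeasurableSpace Ω] (μ : MeasureTheory.Measure Ω)
    (hsemi : ∀ E : Set Ω, MeasurableSet E → μ E = ∞ →
      ∃ F : Set Ω, MeasurableSet F ∧ F ⊆ E ∧ 0 < μ F ∧ μ F < ∞) :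
    CountableSupProperty (Ω →ₘ[μ] ℝ) ↔ MeasureTheory.SigmaFinite μ :=
  ⟨MeasureTheory.sigmaFinite_of_countableSupProperty hsemi,
    fun _ => MeasureTheory.countableSupProperty_of_sFinite μ⟩
end
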